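/- arXiv:1706.05755 — 7 statements merged into one kernel-verified Lean document; each statement's English description precedes it below -/
import Mathlib

section
/- Let (X, M) be a multi-normed vector lattice and e ∈ X₊ a nonzero element. Then e is a quasi-interior point (i.e., the principal ideal I_e is m-dense in X) if and only if for every x ∈ X₊ the sequence x ∧ ne m-converges to x as n → ∞. -/
/-!
If `I_e` is m-dense, then for each `x` and each seminorm `m_λ` there is `y ∈ I_e` close to `x`;
since `y ≤ |y| ≤ c e ≤ n e` for `n ≥ c`, we get `0 ≤ x - x ⊓ n e ≤ x - x ⊓ y ≤ |x - y|`, so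
`m_λ(x - x ⊓ n e) ≤ m_λ(x - y)`. Conversely, writing `x = x⁺ - x⁻`, the elements
`x⁺ ⊓ n e - x⁻ ⊓ n e ∈ I_e` m-converge to `x`.

The inequality `c e ≤ n e` comes from the seminorms: dyadic multiples of a positive element are
positive because `0 ≤ 2 • a → 0 ≤ a` in a lattice-ordered group, and the positive cone is
m-closed.
-/

open Filter Topology

/-- The (locally convex-solid) topology on `X` generated by a family of lattice seminorms:
subbasic open sets are the seminorm balls. -/
def mTop {X : Type*} [AddCommGroup X] [Lattice X] {Λ : Type*} (m : Λ → X → ℝ) :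
    TopologicalSpace X :=
  TopologicalSpace.generateFrom
    {s | ∃ (z : X) (ε : ℝ) (l : Λ), 0 < ε ∧ s = {y : X | m l (y - z) < ε}}

section Seminorm

variable {X : Type*} [AddCommGroup X] [Module ℝ X] {p : X → ℝ}

lemma map_zero_of_abs_smul (hsmul : ∀ (c : ℝ) x, p (c • x) = |c| * p x) : p 0 = 0 := by
  simpa using hsmul 0 0

lemma map_neg_of_abs_smul (hsmul : ∀ (c : ℝ) x, p (c • x) = |c| * p x) (x : X) :
    p (-x) = p x := by
  simpa using hsmul (-1) x

lemma nonneg_of_abs_smul (hadd : ∀ x y, p (x + y) ≤ p x + p y)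
    (hsmul : ∀ (c : ℝ) x, p (c • x) = |c| * p x) (x : X) : 0 ≤ p x := by
  have h := hadd x (-x)
  rw [add_neg_cancel, map_zero_of_abs_smul hsmul, map_neg_of_abs_smul hsmul] at h
  linarith

lemma map_sub_le_add_of_abs_smul (hadd : ∀ x y, p (x + y) ≤ p x + p y)
    (hsmul : ∀ (c : ℝ) x, p (c • x) = |c| * p x) (x y : X) : p (x - y) ≤ p x + p y := by
  simpa [sub_eq_add_neg, map_neg_of_abs_smul hsmul] using hadd x (-y)

end Seminorm

section LatticeOrderedGroup

variable {X : Type*} [AddCommGroup X] [Lattice X] [AddLeftMono X]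

lemma nonneg_of_two_pow_nsmul_nonneg {a : X} : ∀ j : ℕ, 0 ≤ 2 ^ j • a → 0 ≤ a
  | 0, h => by simpa using h
  | j + 1, h => nonneg_of_two_pow_nsmul_nonneg j <| nsmul_two_semiclosed <| by
      rwa [pow_succ, mul_nsmul] at h

lemma sub_inf_le_abs_sub {x y b : X} (hyb : y ≤ b) : x - x ⊓ b ≤ |x - y| :=
  calc x - x ⊓ b ≤ x - x ⊓ y := sub_le_sub_left (inf_le_inf_left x hyb) x
    _ = (x - y) ⊔ 0 := by rw [sub_inf, sub_self, sup_comm]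
    _ ≤ |x - y| := sup_le (le_abs_self _) (abs_nonneg _)

lemma abs_inf_sub_inf_le_of_nonneg {a b c : X} (ha : 0 ≤ a) (hb : 0 ≤ b) (hc : 0 ≤ c) :
    |a ⊓ c - b ⊓ c| ≤ c :=
  abs_le'.2 ⟨(sub_le_self _ (le_inf hb hc)).trans inf_le_right, by
    rw [neg_sub]; exact (sub_le_self _ (le_inf ha hc)).trans inf_le_right⟩

lemma dyadic_smul_nonneg [Module ℝ X] {w : X} (hw : 0 ≤ w) (k j : ℕ) :
    0 ≤ ((k : ℝ) / 2 ^ j) • w := by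
  refine nonneg_of_two_pow_nsmul_nonneg j ?_
  rw [← Nat.cast_smul_eq_nsmul ℝ, smul_smul, Nat.cast_pow, Nat.cast_ofNat,
    mul_div_cancel₀ _ (by positivity), Nat.cast_smul_eq_nsmul]
  exact nsmul_nonneg hw k

end LatticeOrderedGroup

section Topology

variable {X : Type*} [AddCommGroup X] [Lattice X] {Λ : Type*} {m : Λ → X → ℝ}

lemma isOpen_mTop_ball (l : Λ) (z : X) {ε : ℝ} (hε : 0 < ε) :
    IsOpen[mTop m] {y | m l (y - z) < ε} :=
  TopologicalSpace.isOpen_generateFrom_of_mem ⟨z, ε, l, hε, rfl⟩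

lemma tendsto_mTop_of_tendsto_seminorm (hadd : ∀ l (x y : X), m l (x + y) ≤ m l x + m l y)
    {ι : Type*} {f : Filter ι} {y : ι → X} {x : X}
    (hy : ∀ l, Tendsto (fun i => m l (y i - x)) f (𝓝 0)) : Tendsto y f (@nhds X (mTop m) x) := by
  rw [mTop, TopologicalSpace.tendsto_nhds_generateFrom_iff]
  rintro _ ⟨z, ε, l, -, rfl⟩ (hx : m l (x - z) < ε)
  filter_upwards [(hy l).eventually (gt_mem_nhds (sub_pos.2 hx))] with i hi
  calc m l (y i - z) = m l ((y i - x) + (x - z)) := by rw [sub_add_sub_cancel]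
    _ ≤ m l (y i - x) + m l (x - z) := hadd l _ _
    _ < ε := by linarith

end Topology

section MultiNormed

variable {X : Type*} [AddCommGroup X] [Lattice X] [AddLeftMono X] [Module ℝ X]
  {Λ : Type*} {m : Λ → X → ℝ}

lemma smul_nonneg_of_seminorms (hadd : ∀ l (x y : X), m l (x + y) ≤ m l x + m l y)
    (hsmul : ∀ l (c : ℝ) (x : X), m l (c • x) = |c| * m l x)
    (hmono : ∀ l (x y : X), |x| ≤ |y| → m l x ≤ m l y)
    (hsep : ∀ x : X, (∀ l, m l x = 0) → x = 0) {t : ℝ} (ht : 0 ≤ t) {w : X} (hw : 0 ≤ w) :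
    0 ≤ t • w := by
  refine inf_eq_right.mp <| hsep _ fun l =>
    le_antisymm ?_ (nonneg_of_abs_smul (hadd l) (hsmul l) _)
  set q : ℕ → ℝ := fun j => ⌈t * 2 ^ j⌉₊ / 2 ^ j
  have hq : Tendsto q atTop (𝓝 t) :=
    (tendsto_nat_ceil_mul_div_atTop ht).comp (tendsto_pow_atTop_atTop_of_one_lt one_lt_two)
  have hbound : ∀ j, m l (t • w ⊓ 0) ≤ |t - q j| * m l w := fun j => by
    have h := abs_inf_sub_inf_le_abs (t • w) (q j • w) 0
    rw [inf_eq_right.mpr (dyadic_smul_nonneg hw _ j), sub_zero, ← sub_smul] at h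
    simpa only [hsmul] using hmono l _ _ h
  have hlim : Tendsto (fun j => |t - q j| * m l w) atTop (𝓝 0) := by
    simpa using ((hq.const_sub t).abs.mul_const (m l w))
  exact ge_of_tendsto' hlim hbound

theorem tendsto_sub_inf_nsmul_of_dense (hadd : ∀ l (x y : X), m l (x + y) ≤ m l x + m l y)
    (hsmul : ∀ l (c : ℝ) (x : X), m l (c • x) = |c| * m l x)
    (hmono : ∀ l (x y : X), |x| ≤ |y| → m l x ≤ m l y)
    (hsep : ∀ x : X, (∀ l, m l x = 0) → x = 0) {e : X} (he : 0 ≤ e)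
    (hd : @Dense X (mTop m) {x : X | ∃ c : ℝ, 0 < c ∧ |x| ≤ c • e}) (x : X) (l : Λ) :
    Tendsto (fun n : ℕ => m l (x - x ⊓ (n • e))) atTop (𝓝 0) := by
  let := mTop m
  refine tendsto_order.2 ⟨fun a ha => .of_forall fun n =>
    ha.trans_le (nonneg_of_abs_smul (hadd l) (hsmul l) _), fun ε hε => ?_⟩
  obtain ⟨y, hyx, c, -, hyc⟩ := hd.inter_open_nonempty _ (isOpen_mTop_ball l x hε)
    ⟨x, by simpa [map_zero_of_abs_smul (hsmul l)]⟩
  filter_upwards [eventually_ge_atTop ⌈c⌉₊] with n hn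
  have hyn : y ≤ n • e := calc
    y ≤ |y| := le_abs_self y
    _ ≤ c • e := hyc
    _ ≤ (n : ℝ) • e := sub_nonneg.1 <| by
      rw [← sub_smul]
      exact smul_nonneg_of_seminorms hadd hsmul hmono hsep (sub_nonneg.2 (Nat.ceil_le.1 hn)) he
    _ = n • e := Nat.cast_smul_eq_nsmul ℝ n e
  calc m l (x - x ⊓ n • e) ≤ m l (x - y) := hmono l _ _ <| by
        rw [abs_of_nonneg (sub_nonneg.2 inf_le_left)]; exact sub_inf_le_abs_sub hyn
    _ = m l (y - x) := by rw [← neg_sub, map_neg_of_abs_smul (hsmul l)]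
    _ < ε := hyx

theorem dense_of_tendsto_sub_inf_nsmul (hadd : ∀ l (x y : X), m l (x + y) ≤ m l x + m l y)
    (hsmul : ∀ l (c : ℝ) (x : X), m l (c • x) = |c| * m l x) {e : X} (he : 0 ≤ e)
    (h : ∀ x : X, 0 ≤ x → ∀ l, Tendsto (fun n : ℕ => m l (x - x ⊓ (n • e))) atTop (𝓝 0)) :
    @Dense X (mTop m) {x : X | ∃ c : ℝ, 0 < c ∧ |x| ≤ c • e} := by
  let := mTop m
  intro x
  set y : ℕ → X := fun n => x⁺ ⊓ n • e - x⁻ ⊓ n • e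
  have hyx (n : ℕ) : y n - x = (x⁻ - x⁻ ⊓ n • e) - (x⁺ - x⁺ ⊓ n • e) := by
    conv_lhs => rw [← posPart_sub_negPart x]
    simp only [y]
    abel
  have hy : Tendsto y atTop (𝓝 x) := by
    refine tendsto_mTop_of_tendsto_seminorm hadd fun l =>
      squeeze_zero (fun n => nonneg_of_abs_smul (hadd l) (hsmul l) _) (fun n => ?_)
        (by simpa using (h _ (negPart_nonneg x) l).add (h _ (posPart_nonneg x) l))
    rw [hyx]
    exact map_sub_le_add_of_abs_smul (hadd l) (hsmul l) _ _
  refine mem_closure_of_tendsto hy ?_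
  filter_upwards [eventually_ge_atTop 1] with n hn
  refine ⟨n, by exact_mod_cast hn, ?_⟩
  rw [Nat.cast_smul_eq_nsmul]
  exact abs_inf_sub_inf_le_of_nonneg (posPart_nonneg x) (negPart_nonneg x) (nsmul_nonneg he n)

end MultiNormed

theorem stmt3_general {X : Type*} [AddCommGroup X] [Lattice X]
    [CovariantClass X X (· + ·) (· ≤ ·)] [Module ℝ X]
    {Λ : Type*} (m : Λ → X → ℝ)
    (hadd : ∀ l (x y : X), m l (x + y) ≤ m l x + m l y)
    (hsmul : ∀ l (c : ℝ) (x : X), m l (c • x) = |c| * m l x)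
    (hmono : ∀ l (x y : X), |x| ≤ |y| → m l x ≤ m l y)
    (hsep : ∀ x : X, (∀ l, m l x = 0) → x = 0)
    (e : X) (he : 0 ≤ e) :
    @Dense X (mTop m) {x : X | ∃ c : ℝ, 0 < c ∧ |x| ≤ c • e} ↔
      ∀ x : X, 0 ≤ x → ∀ l, Tendsto (fun n : ℕ => m l (x - x ⊓ (n • e))) atTop (𝓝 0) :=
  ⟨fun hd x _ l => tendsto_sub_inf_nsmul_of_dense hadd hsmul hmono hsep he hd x l,
    dense_of_tendsto_sub_inf_nsmul hadd hsmul he⟩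

/-- In an MNVL `(X, M)`, a nonzero `e ∈ X₊` is a quasi-interior point (the
principal ideal `I_e` is m-dense in `X`) iff for every `x ∈ X₊` the sequence `x ⊓ n e`
m-converges to `x`. -/
theorem stmt3 {X : Type*} [AddCommGroup X] [Lattice X]
    [CovariantClass X X (· + ·) (· ≤ ·)] [Module ℝ X]
    {Λ : Type*} (m : Λ → X → ℝ)
    (hadd : ∀ l (x y : X), m l (x + y) ≤ m l x + m l y)
    (hsmul : ∀ l (c : ℝ) (x : X), m l (c • x) = |c| * m l x)
    (hmono : ∀ l (x y : X), |x| ≤ |y| → m l x ≤ m l y)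
    (hsep : ∀ x : X, (∀ l, m l x = 0) → x = 0)
    (hdir : ∀ l₁ l₂, ∃ l₃, ∀ x : X, m l₁ x ≤ m l₃ x ∧ m l₂ x ≤ m l₃ x)
    (e : X) (he : 0 ≤ e) (hne : e ≠ 0) :
    @Dense X (mTop m) {x : X | ∃ c : ℝ, 0 < c ∧ |x| ≤ c • e} ↔
      ∀ x : X, 0 ≤ x → ∀ l, Tendsto (fun n : ℕ => m l (x - x ⊓ (n • e))) atTop (𝓝 0) :=
  stmt3_general m hadd hsmul hmono hsep e he
end

section
/- In the MNVL X = C[0,1] equipped with the lattice seminorms m_{[a,b]}(f) = (1/(b-a)) ∫_a^b |f(t)| dt over all subintervals [a,b] ⊆ [0,1] with a < b, the sequence f_n defined by f_n(x) = n on [0, 1/n], f_n(x) = n²(1-n)x + n² on [1/n, 1/(n-1)], and f_n(x) = 0 on [1/(n-1), 1] (for n ≥ 2) is um-convergent to 0 but not m-convergent to 0. -/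
open Filter Topology

/-- The lattice seminorm `m_{[a,b]}(g) = (b-a)⁻¹ ∫_a^b |g(t)| dt` on `C([0,1], ℝ)`. -/
noncomputable def msem (a b : ℝ) (g : C(Set.Icc (0:ℝ) 1, ℝ)) : ℝ :=
  (b - a)⁻¹ * ∫ t in a..b, |g (Set.projIcc 0 1 zero_le_one t)|

/-- The sequence `f_n` from the paper: `f_n = n` on `[0, 1/n]`, affine
(`n²(1-n)x + n²`) on `[1/n, 1/(n-1)]`, and `0` on `[1/(n-1), 1]`; written in closed form
as `min n (max 0 (n²(1-n)x + n²))`. -/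
noncomputable def fseq (n : ℕ) : C(Set.Icc (0:ℝ) 1, ℝ) :=
  ⟨fun x => min (n : ℝ) (max 0 ((n : ℝ)^2 * (1 - (n : ℝ)) * (x : ℝ) + (n : ℝ)^2)), by
    fun_prop⟩

/-! The mass of `f_n` stays at least `1` but concentrates at the point `0`. Pointwise
`f_n → 0` off `0`, so after truncation by a fixed `u` dominated convergence kills every
`m_{[a,b]}`; without truncation the plateau `f_n = n` on `[0, 1/n]` keeps `m_{[0,1]}(f_n) ≥ 1`. -/

lemma continuous_abs_comp_projIcc (g : C(Set.Icc (0:ℝ) 1, ℝ)) :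
    Continuous (fun t : ℝ => |g (Set.projIcc 0 1 zero_le_one t)|) :=
  (g.continuous.comp continuous_projIcc).abs

lemma tendsto_msem_zero_of_bounded {g : ℕ → C(Set.Icc (0:ℝ) 1, ℝ)} {C : ℝ}
    (hbound : ∀ n x, |g n x| ≤ C)
    (hlim : ∀ x : Set.Icc (0:ℝ) 1, 0 < (x : ℝ) → Tendsto (fun n => g n x) atTop (𝓝 0))
    {a b : ℝ} (ha : 0 ≤ a) (hb : 0 ≤ b) :
    Tendsto (fun n => msem a b (g n)) atTop (𝓝 0) := by
  have hint : Tendsto (fun n => ∫ t in a..b, |g n (Set.projIcc 0 1 zero_le_one t)|)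
      atTop (𝓝 (∫ _ in a..b, (0:ℝ))) := by
    refine intervalIntegral.tendsto_integral_filter_of_dominated_convergence (fun _ => C)
      (.of_forall fun n => (continuous_abs_comp_projIcc (g n)).aestronglyMeasurable)
      (.of_forall fun n => .of_forall fun t _ => by simpa using hbound n _)
      intervalIntegrable_const (.of_forall fun t ht => ?_)
    have hpos : 0 < (Set.projIcc 0 1 zero_le_one t : ℝ) := by
      rw [Set.coe_projIcc]
      exact lt_max_of_lt_right (lt_min one_pos ((le_min ha hb).trans_lt ht.1))
    simpa using (hlim _ hpos).abs
  simpa [msem] using hint.const_mul (b - a)⁻¹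

lemma fseq_eq_zero {n : ℕ} {x : Set.Icc (0:ℝ) 1} (hx : 1 ≤ ((n : ℝ) - 1) * x) :
    fseq n x = 0 := by
  have hneg : (n : ℝ)^2 * (1 - n) * x + (n : ℝ)^2 ≤ 0 := by nlinarith [sq_nonneg (n : ℝ)]
  show min (n : ℝ) (max 0 _) = 0
  rw [max_eq_left hneg, min_eq_right n.cast_nonneg]

lemma fseq_eq_natCast {n : ℕ} (hn : 1 ≤ n) {x : Set.Icc (0:ℝ) 1} (hx : (n : ℝ) * x ≤ 1) :
    fseq n x = n := by
  have hn1 : (1 : ℝ) ≤ n := by exact_mod_cast hn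
  have hge : (n : ℝ) ≤ (n : ℝ)^2 * (1 - n) * x + (n : ℝ)^2 := by
    nlinarith [mul_nonneg (sub_nonneg.mpr hn1) (sub_nonneg.mpr hx), x.2.1]
  show min (n : ℝ) (max 0 _) = n
  rw [max_eq_right (by linarith), min_eq_left hge]

lemma tendsto_fseq_zero {x : Set.Icc (0:ℝ) 1} (hx : 0 < (x : ℝ)) :
    Tendsto (fun n => fseq n x) atTop (𝓝 0) := by
  have hgrow : Tendsto (fun n : ℕ => ((n : ℝ) - 1) * x) atTop atTop :=
    (tendsto_atTop_add_const_right _ (-1) tendsto_natCast_atTop_atTop).atTop_mul_const hx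
  exact tendsto_const_nhds.congr'
    ((hgrow.eventually_ge_atTop 1).mono fun n hn => (fseq_eq_zero hn).symm)

lemma one_le_msem_fseq {n : ℕ} (hn : 1 ≤ n) : 1 ≤ msem 0 1 (fseq n) := by
  have hnpos : (0 : ℝ) < n := by exact_mod_cast hn
  have hinv_le : (n : ℝ)⁻¹ ≤ 1 := inv_le_one_of_one_le₀ (by exact_mod_cast hn)
  have hplateau :
      ∫ t in (0:ℝ)..(n : ℝ)⁻¹, |fseq n (Set.projIcc 0 1 zero_le_one t)| = 1 := by
    rw [intervalIntegral.integral_congr (g := fun _ => (n : ℝ)),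
      intervalIntegral.integral_const, smul_eq_mul, sub_zero, inv_mul_cancel₀ hnpos.ne']
    intro t ht
    rw [Set.uIcc_of_le (inv_pos.mpr hnpos).le] at ht
    have hmem : t ∈ Set.Icc (0:ℝ) 1 := ⟨ht.1, ht.2.trans hinv_le⟩
    dsimp only
    rw [Set.projIcc_of_mem _ hmem, fseq_eq_natCast hn, abs_of_nonneg hnpos.le]
    calc (n : ℝ) * t ≤ n * (n : ℝ)⁻¹ := mul_le_mul_of_nonneg_left ht.2 hnpos.le
      _ = 1 := mul_inv_cancel₀ hnpos.ne'
  calc (1 : ℝ)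
      = ∫ t in (0:ℝ)..(n : ℝ)⁻¹, |fseq n (Set.projIcc 0 1 zero_le_one t)| := hplateau.symm
    _ ≤ ∫ t in (0:ℝ)..1, |fseq n (Set.projIcc 0 1 zero_le_one t)| :=
      intervalIntegral.integral_mono_interval le_rfl (inv_pos.mpr hnpos).le hinv_le
        (.of_forall fun _ => abs_nonneg _)
        ((continuous_abs_comp_projIcc _).intervalIntegrable _ _)
    _ = msem 0 1 (fseq n) := by simp [msem]

lemma tendsto_msem_abs_fseq_inf {u : C(Set.Icc (0:ℝ) 1, ℝ)} (hu : 0 ≤ u) {a b : ℝ}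
    (ha : 0 ≤ a) (hb : 0 ≤ b) :
    Tendsto (fun n => msem a b (|fseq n| ⊓ u)) atTop (𝓝 0) := by
  have htrunc (n : ℕ) (x : Set.Icc (0:ℝ) 1) : (|fseq n| ⊓ u) x = min |fseq n x| (u x) := rfl
  have hnonneg (n : ℕ) (x : Set.Icc (0:ℝ) 1) : 0 ≤ (|fseq n| ⊓ u) x :=
    htrunc n x ▸ le_min (abs_nonneg _) (hu x)
  refine tendsto_msem_zero_of_bounded (C := ‖u‖) (fun n x => ?_) (fun x hx => ?_) ha hb
  · rw [abs_of_nonneg (hnonneg n x), htrunc]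
    exact (min_le_right _ _).trans ((le_abs_self _).trans (u.norm_coe_le_norm x))
  · have hdom := (tendsto_fseq_zero hx).abs
    rw [abs_zero] at hdom
    exact tendsto_of_tendsto_of_tendsto_of_le_of_le tendsto_const_nhds hdom (hnonneg · x)
      fun n => (htrunc n x).trans_le (min_le_left _ _)

/-- In the MNVL `C[0,1]` with the seminorms `m_{[a,b]}`, the sequence `f_n`
um-converges to `0` but does not m-converge to `0`. -/
theorem stmt6 :
    (∀ u : C(Set.Icc (0:ℝ) 1, ℝ), 0 ≤ u →
      ∀ a b : ℝ, 0 ≤ a → a < b → b ≤ 1 →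
        Tendsto (fun n : ℕ => msem a b (|fseq n| ⊓ u)) atTop (𝓝 0)) ∧
    ¬ (∀ a b : ℝ, 0 ≤ a → a < b → b ≤ 1 →
        Tendsto (fun n : ℕ => msem a b (fseq n)) atTop (𝓝 0)) := by
  refine ⟨fun u hu a b ha hab _ => tendsto_msem_abs_fseq_inf hu ha (ha.trans hab.le),
    fun h => ?_⟩
  obtain ⟨n, hlt, hn⟩ := (((h 0 1 le_rfl one_pos le_rfl).eventually (gt_mem_nhds one_pos)).and
    (eventually_ge_atTop 1)).exists
  exact (one_le_msem_fseq hn).not_gt hlt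
end

section
/- Let (X, M) be a multi-normed vector lattice and A ⊆ X an m-bounded subset. Then the um-closure of A is m-bounded; more precisely, for each λ, sup{m_λ(x) : x in the um-closure of A} ≤ sup{m_λ(a) : a ∈ A}. -/
open Filter Topology

/-- The um-topology generated by a family of lattice seminorms. -/
def umTop {X : Type*} [AddCommGroup X] [Lattice X] {Λ : Type*} (m : Λ → X → ℝ) :
    TopologicalSpace X :=
  TopologicalSpace.generateFrom
    {s | ∃ (z : X) (ε : ℝ) (l : Λ) (u : X), 0 < ε ∧ 0 ≤ u ∧
          s = {y : X | m l (|y - z| ⊓ u) < ε}}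

/-!
If `x` lies in the um-closure of `A`, then for every `ε > 0` some `a ∈ A` satisfies
`m_λ(|a - x| ∧ |x|) < ε`, using the basic um-neighbourhood of `x` with truncation `u = |x|`.
The lattice inequality `|x| ≤ (|a - x| ∧ |x|) + |a|` then gives
`m_λ(x) ≤ m_λ(|a - x| ∧ |x|) + m_λ(a) < ε + sup_A m_λ`.
-/

section LatticeSeminorm

variable {X : Type*} [AddCommGroup X] [Lattice X] [AddLeftMono X]

theorem abs_le_abs_sub_inf_abs_add_abs (a x : X) : |x| ≤ |a - x| ⊓ |x| + |a| := by
  refine sub_le_iff_le_add.1 (le_inf ?_ (sub_le_self _ (abs_nonneg a)))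
  rw [abs_sub_comm, sub_le_iff_le_add]
  simpa using abs_add_le (x - a) a

theorem le_inf_add_of_subadditive_of_mono (p : X → ℝ) (hadd : ∀ x y, p (x + y) ≤ p x + p y)
    (hmono : ∀ x y, |x| ≤ |y| → p x ≤ p y) (a x : X) : p x ≤ p (|a - x| ⊓ |x|) + p a := by
  have hnonneg : (0 : X) ≤ |a - x| ⊓ |x| + |a| :=
    add_nonneg (le_inf (abs_nonneg _) (abs_nonneg _)) (abs_nonneg a)
  calc p x ≤ p (|a - x| ⊓ |x| + |a|) :=
        hmono _ _ (by rw [abs_of_nonneg hnonneg]; exact abs_le_abs_sub_inf_abs_add_abs a x)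
    _ ≤ p (|a - x| ⊓ |x|) + p |a| := hadd _ _
    _ ≤ p (|a - x| ⊓ |x|) + p a := by gcongr; exact hmono _ _ (abs_abs a).le

end LatticeSeminorm

section UmTopology

variable {X : Type*} [AddCommGroup X] [Lattice X] {Λ : Type*} (m : Λ → X → ℝ)

theorem isOpen_umTop_setOf_inf_lt (z : X) {ε : ℝ} (hε : 0 < ε) (l : Λ) {u : X} (hu : 0 ≤ u) :
    IsOpen[umTop m] {y | m l (|y - z| ⊓ u) < ε} :=
  TopologicalSpace.GenerateOpen.basic _ ⟨z, ε, l, u, hε, hu, rfl⟩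

theorem exists_mem_inf_lt_of_mem_closure_umTop [AddLeftMono X] {l : Λ} (hm0 : m l 0 = 0)
    {A : Set X} {x : X} (hx : x ∈ @closure X (umTop m) A) {ε : ℝ} (hε : 0 < ε) {u : X}
    (hu : 0 ≤ u) : ∃ a ∈ A, m l (|a - x| ⊓ u) < ε := by
  have hxs : x ∈ {y | m l (|y - x| ⊓ u) < ε} := by
    simpa only [Set.mem_ofPred_eq, sub_self, abs_zero, inf_eq_left.2 hu, hm0] using hε
  obtain ⟨a, has, haA⟩ :=
    (@mem_closure_iff X (umTop m) _ _).1 hx _ (isOpen_umTop_setOf_inf_lt m x hε l hu) hxs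
  exact ⟨a, haA, has⟩

theorem le_of_mem_closure_umTop [AddLeftMono X] {l : Λ}
    (hadd : ∀ x y : X, m l (x + y) ≤ m l x + m l y)
    (hmono : ∀ x y : X, |x| ≤ |y| → m l x ≤ m l y) (hm0 : m l 0 = 0)
    {A : Set X} {M : ℝ} (hM : ∀ a ∈ A, m l a ≤ M) {x : X} (hx : x ∈ @closure X (umTop m) A) :
    m l x ≤ M := by
  refine le_of_forall_pos_le_add fun ε hε => ?_
  obtain ⟨a, haA, hax⟩ := exists_mem_inf_lt_of_mem_closure_umTop m hm0 hx hε (abs_nonneg x)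
  linarith [le_inf_add_of_subadditive_of_mono (m l) hadd hmono a x, hM a haA]

end UmTopology

theorem stmt11_general {X : Type*} [AddCommGroup X] [Lattice X]
    [CovariantClass X X (· + ·) (· ≤ ·)] [Module ℝ X]
    {Λ : Type*} (m : Λ → X → ℝ)
    (hadd : ∀ l (x y : X), m l (x + y) ≤ m l x + m l y)
    (hsmul : ∀ l (c : ℝ) (x : X), m l (c • x) = |c| * m l x)
    (hmono : ∀ l (x y : X), |x| ≤ |y| → m l x ≤ m l y)
    (A : Set X) (hAbdd : ∀ l, ∃ M : ℝ, ∀ a ∈ A, m l a ≤ M) :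
    (∀ l, ∃ M : ℝ, ∀ x ∈ @closure X (umTop m) A, m l x ≤ M) ∧
    (∀ (l : Λ) (M : ℝ), (∀ a ∈ A, m l a ≤ M) →
        ∀ x ∈ @closure X (umTop m) A, m l x ≤ M) := by
  have hm0 : ∀ l, m l 0 = 0 := fun l => by simpa using hsmul l 0 0
  have hclosure : ∀ (l : Λ) (M : ℝ), (∀ a ∈ A, m l a ≤ M) →
      ∀ x ∈ @closure X (umTop m) A, m l x ≤ M := fun l _ hM _ hx =>
    le_of_mem_closure_umTop m (hadd l) (hmono l) (hm0 l) hM hx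
  refine ⟨fun l => ?_, hclosure⟩
  obtain ⟨M, hM⟩ := hAbdd l
  exact ⟨M, hclosure l M hM⟩

/-- In an MNVL, the um-closure of an m-bounded set `A` is m-bounded;
more precisely, any bound `M` for `m l` on `A` also bounds `m l` on the um-closure. -/
theorem stmt11 {X : Type*} [AddCommGroup X] [Lattice X]
    [CovariantClass X X (· + ·) (· ≤ ·)] [Module ℝ X]
    {Λ : Type*} (m : Λ → X → ℝ)
    (hadd : ∀ l (x y : X), m l (x + y) ≤ m l x + m l y)
    (hsmul : ∀ l (c : ℝ) (x : X), m l (c • x) = |c| * m l x)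
    (hmono : ∀ l (x y : X), |x| ≤ |y| → m l x ≤ m l y)
    (hsep : ∀ x : X, (∀ l, m l x = 0) → x = 0)
    (hdir : ∀ l₁ l₂, ∃ l₃, ∀ x : X, m l₁ x ≤ m l₃ x ∧ m l₂ x ≤ m l₃ x)
    (A : Set X) (hAbdd : ∀ l, ∃ M : ℝ, ∀ a ∈ A, m l a ≤ M) :
    (∀ l, ∃ M : ℝ, ∀ x ∈ @closure X (umTop m) A, m l x ≤ M) ∧
    (∀ (l : Λ) (M : ℝ), (∀ a ∈ A, m l a ≤ M) →
        ∀ x ∈ @closure X (umTop m) A, m l x ≤ M) :=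
  stmt11_general m hadd hsmul hmono A hAbdd
end

section
/- Let (X, M) be a multi-normed vector lattice. If x_α is an increasing net in X that um-converges to x, then x_α ↑ x (x is the supremum of the net) and x_α m-converges to x. -/
/-! If `0 ≤ u ≤ |x_α - x|` eventually, then `|x_α - x| ⊓ u` is eventually the constant `u`, so
um-convergence forces `m_λ u = 0` for every `λ`, i.e. `u = 0`. Taking `u = (x - y)⁺` shows that
um-limits respect eventual order bounds, which for an increasing net gives `x = sup x_α`. Then
`|x_α - x| ≤ x - x_{α₀}` for `α ≥ α₀`, and um-convergence tested against `u = x - x_{α₀}` is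
m-convergence. -/

open Filter Topology

section UmConvergence

variable {X : Type*} [AddCommGroup X] [Lattice X]
  {Λ : Type*} {m : Λ → X → ℝ} {ι : Type*} {f : Filter ι} {x : ι → X} {x₀ : X}

def UmTendsto (m : Λ → X → ℝ) (x : ι → X) (f : Filter ι) (x₀ : X) : Prop :=
  ∀ u : X, 0 ≤ u → ∀ l, Tendsto (fun a => m l (|x a - x₀| ⊓ u)) f (𝓝 0)

theorem UmTendsto.neg (h : UmTendsto m x f x₀) : UmTendsto m (-x) f (-x₀) := by
  intro u hu l
  simpa only [Pi.neg_apply, neg_sub_neg, abs_sub_comm] using h u hu l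

theorem UmTendsto.eq_zero_of_eventually_le_abs [f.NeBot]
    (hsep : ∀ v : X, (∀ l, m l v = 0) → v = 0) (h : UmTendsto m x f x₀)
    {u : X} (hu : 0 ≤ u) (hle : ∀ᶠ a in f, u ≤ |x a - x₀|) : u = 0 := by
  refine hsep u fun l => tendsto_nhds_unique tendsto_const_nhds ((h u hu l).congr' ?_)
  filter_upwards [hle] with a ha
  rw [inf_eq_right.mpr ha]

theorem UmTendsto.le_of_eventually_le [AddLeftMono X] [f.NeBot]
    (hsep : ∀ v : X, (∀ l, m l v = 0) → v = 0) (h : UmTendsto m x f x₀)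
    {y : X} (hle : ∀ᶠ a in f, x a ≤ y) : x₀ ≤ y := by
  suffices (x₀ - y)⁺ = 0 from sub_nonpos.mp (posPart_eq_zero.mp this)
  refine h.eq_zero_of_eventually_le_abs hsep (posPart_nonneg _) ?_
  filter_upwards [hle] with a ha
  calc (x₀ - y)⁺ ≤ (x₀ - x a)⁺ := posPart_mono (sub_le_sub_left ha _)
    _ ≤ |x₀ - x a| := sup_le (le_abs_self _) (abs_nonneg _)
    _ = |x a - x₀| := abs_sub_comm _ _

theorem UmTendsto.ge_of_eventually_ge [AddLeftMono X] [f.NeBot]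
    (hsep : ∀ v : X, (∀ l, m l v = 0) → v = 0) (h : UmTendsto m x f x₀)
    {y : X} (hle : ∀ᶠ a in f, y ≤ x a) : y ≤ x₀ :=
  neg_le_neg_iff.mp <| h.neg.le_of_eventually_le hsep <| hle.mono fun _ => neg_le_neg_iff.mpr

theorem UmTendsto.tendsto_of_eventually_abs_le [AddLeftMono X]
    (hmono : ∀ l (v w : X), |v| ≤ |w| → m l v ≤ m l w) (h : UmTendsto m x f x₀)
    {u : X} (hle : ∀ᶠ a in f, |x a - x₀| ≤ u) (l : Λ) :
    Tendsto (fun a => m l (x a - x₀)) f (𝓝 0) := by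
  refine (h |u| (abs_nonneg u) l).congr' ?_
  filter_upwards [hle] with a ha
  rw [inf_eq_left.mpr (ha.trans (le_abs_self u))]
  exact le_antisymm (hmono l _ _ (abs_abs _).le) (hmono l _ _ (abs_abs _).ge)

variable [AddLeftMono X] [Preorder ι] [Nonempty ι] [IsDirected ι (· ≤ ·)]

theorem Monotone.isLUB_of_umTendsto (hsep : ∀ v : X, (∀ l, m l v = 0) → v = 0)
    (hx : Monotone x) (h : UmTendsto m x atTop x₀) : IsLUB (Set.range x) x₀ := by
  refine ⟨?_, fun y hy => h.le_of_eventually_le hsep (Eventually.of_forall fun a => hy ⟨a, rfl⟩)⟩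
  rintro _ ⟨a, rfl⟩
  exact h.ge_of_eventually_ge hsep ((eventually_ge_atTop a).mono fun _ hb => hx hb)

theorem Monotone.tendsto_of_umTendsto (hsep : ∀ v : X, (∀ l, m l v = 0) → v = 0)
    (hmono : ∀ l (v w : X), |v| ≤ |w| → m l v ≤ m l w)
    (hx : Monotone x) (h : UmTendsto m x atTop x₀) (l : Λ) :
    Tendsto (fun a => m l (x a - x₀)) atTop (𝓝 0) := by
  obtain ⟨a₀⟩ := ‹Nonempty ι›
  have hub : ∀ a, x a ≤ x₀ := fun a => (hx.isLUB_of_umTendsto hsep h).1 ⟨a, rfl⟩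
  refine h.tendsto_of_eventually_abs_le hmono (u := x₀ - x a₀) ?_ l
  filter_upwards [eventually_ge_atTop a₀] with a ha
  calc |x a - x₀| = x₀ - x a := by rw [abs_sub_comm, abs_of_nonneg (sub_nonneg.mpr (hub a))]
    _ ≤ x₀ - x a₀ := sub_le_sub_left (hx ha) _

end UmConvergence

theorem stmt12_general {X : Type*} [AddCommGroup X] [Lattice X]
    [CovariantClass X X (· + ·) (· ≤ ·)]
    {Λ : Type*} (m : Λ → X → ℝ)
    (hmono : ∀ l (x y : X), |x| ≤ |y| → m l x ≤ m l y)
    (hsep : ∀ x : X, (∀ l, m l x = 0) → x = 0)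
    {α : Type*} [Preorder α] [Nonempty α] [IsDirected α (· ≤ ·)]
    (x : α → X) (hmonot : Monotone x) (x₀ : X)
    (hum : ∀ u : X, 0 ≤ u → ∀ l, Tendsto (fun a => m l (|x a - x₀| ⊓ u)) atTop (𝓝 0)) :
    IsLUB (Set.range x) x₀ ∧
    ∀ l, Tendsto (fun a => m l (x a - x₀)) atTop (𝓝 0) :=
  ⟨hmonot.isLUB_of_umTendsto hsep hum, hmonot.tendsto_of_umTendsto hsep hmono hum⟩

/-- In an MNVL, if an increasing net `x_α` um-converges to `x`, then
`x_α ↑ x` (i.e. `x` is the supremum of the net) and `x_α` m-converges to `x`. -/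
theorem stmt12 {X : Type*} [AddCommGroup X] [Lattice X]
    [CovariantClass X X (· + ·) (· ≤ ·)] [Module ℝ X]
    {Λ : Type*} (m : Λ → X → ℝ)
    (hadd : ∀ l (x y : X), m l (x + y) ≤ m l x + m l y)
    (hsmul : ∀ l (c : ℝ) (x : X), m l (c • x) = |c| * m l x)
    (hmono : ∀ l (x y : X), |x| ≤ |y| → m l x ≤ m l y)
    (hsep : ∀ x : X, (∀ l, m l x = 0) → x = 0)
    (hdir : ∀ l₁ l₂, ∃ l₃, ∀ x : X, m l₁ x ≤ m l₃ x ∧ m l₂ x ≤ m l₃ x)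
    {α : Type*} [Preorder α] [Nonempty α] [IsDirected α (· ≤ ·)]
    (x : α → X) (hmonot : Monotone x) (x₀ : X)
    (hum : ∀ u : X, 0 ≤ u → ∀ l, Tendsto (fun a => m l (|x a - x₀| ⊓ u)) atTop (𝓝 0)) :
    IsLUB (Set.range x) x₀ ∧
    ∀ l, Tendsto (fun a => m l (x a - x₀)) atTop (𝓝 0) :=
  stmt12_general m hmono hsep x hmonot x₀ hum
end

section
/- Let (X, M) be a multi-normed vector lattice with the Lebesgue and Levi properties, and let A ⊆ X be m-bounded and um-closed. Then A is complete in the um-topology: every um-Cauchy net in A um-converges to an element of A. -/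
/-!
Splitting a net into positive and negative parts, it suffices to treat a positive net `y`. For
`p ≥ 0` the truncations `y ∧ p` form an m-Cauchy net in the order interval `[0, p]`, and order
intervals are m-complete: for a single seminorm `m l`, the liminf of a fast subsequence is an
`m l`-limit (Levi provides the suprema, Lebesgue the convergence); the largest `m l`-limit
decreases as the seminorm grows, and the infimum of these largest limits is a limit for every
seminorm. The limits `Y p` of `y ∧ p` increase with `p` (by separation) and are m-bounded, so
by Levi they have a supremum `x₀`, and by Lebesgue `y ∧ p` converges to `x₀ ∧ p` for every
`p ≥ 0`. Since `|y - x₀| ∧ u ≤ |y ∧ (x₀ + u) - x₀|`, this is um-convergence of `y` to `x₀`;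
finally, `x₀ ∈ A` because `A` is um-closed.
-/

open Filter Topology

open Set

universe u

section LatticeOrderedGroup

variable {X : Type*} [AddCommGroup X] [Lattice X] [AddLeftMono X]

lemma add_inf_le_add_inf {a b u : X} (ha : 0 ≤ a) (hb : 0 ≤ b) (hu : 0 ≤ u) :
    (a + b) ⊓ u ≤ a ⊓ u + b ⊓ u := by
  rw [inf_add, add_inf, add_inf]
  exact le_inf (le_inf inf_le_left (inf_le_right.trans (le_add_of_nonneg_left ha)))
    (le_inf (inf_le_right.trans (le_add_of_nonneg_right hb))
      (inf_le_right.trans (le_add_of_nonneg_left hu)))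

lemma abs_add_inf_le (a b : X) {u : X} (hu : 0 ≤ u) : |a + b| ⊓ u ≤ |a| ⊓ u + |b| ⊓ u :=
  (inf_le_inf_right u (abs_add_le a b)).trans
    (add_inf_le_add_inf (abs_nonneg a) (abs_nonneg b) hu)

lemma abs_sup_sub_sup_le_add (a b c d : X) : |a ⊔ b - c ⊔ d| ≤ |a - c| + |b - d| := by
  calc |a ⊔ b - c ⊔ d| = |(a ⊔ b - c ⊔ b) + (c ⊔ b - c ⊔ d)| := by rw [sub_add_sub_cancel]
    _ ≤ |a ⊔ b - c ⊔ b| + |c ⊔ b - c ⊔ d| := abs_add_le _ _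
    _ ≤ |a - c| + |b - d| := by
      have h := abs_sup_sub_sup_le_abs b d c
      rw [sup_comm b c, sup_comm d c] at h
      exact add_le_add (abs_sup_sub_sup_le_abs a c b) h

lemma abs_inf_sub_inf_le_inf {a b u : X} (ha : 0 ≤ a) (hb : 0 ≤ b) (hu : 0 ≤ u) :
    |a ⊓ u - b ⊓ u| ≤ |a - b| ⊓ u := by
  refine le_inf (abs_inf_sub_inf_le_abs a b u) (abs_le'.2 ⟨?_, ?_⟩)
  · exact (sub_le_self _ (le_inf hb hu)).trans inf_le_right
  · rw [neg_sub]
    exact (sub_le_self _ (le_inf ha hu)).trans inf_le_right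

lemma abs_inf_le_abs_inf (a u : X) : |a| ⊓ u ≤ |a ⊓ u| := by
  let := AddCommGroup.toDistribLattice X
  calc |a| ⊓ u = (a ⊓ u) ⊔ (-a ⊓ u) := inf_sup_right _ _ _
    _ ≤ |a ⊓ u| := sup_le (le_abs_self _)
      (inf_le_left.trans ((neg_le_neg_iff.2 inf_le_left).trans (neg_le_abs _)))

lemma abs_sub_inf_le (x y u : X) : |y - x| ⊓ u ≤ |y ⊓ (x + u) - x| := by
  rw [inf_sub, add_sub_cancel_left]
  exact abs_inf_le_abs_inf _ _

end LatticeOrderedGroup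

structure IsLatticeSeminorm {X : Type*} [AddCommGroup X] [Lattice X] (p : X → ℝ) : Prop where
  map_add_le : ∀ x y, p (x + y) ≤ p x + p y
  map_zero : p 0 = 0
  mono : ∀ x y, |x| ≤ |y| → p x ≤ p y

namespace IsLatticeSeminorm

section AddCommGroup

variable {X : Type*} [AddCommGroup X] [Lattice X] {p : X → ℝ}

lemma map_neg (hp : IsLatticeSeminorm p) (x : X) : p (-x) = p x :=
  le_antisymm (hp.mono _ _ (abs_neg x).le) (hp.mono _ _ (abs_neg x).ge)

lemma map_sub_comm (hp : IsLatticeSeminorm p) (x y : X) : p (x - y) = p (y - x) := by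
  rw [← neg_sub, hp.map_neg]

lemma map_sub_le (hp : IsLatticeSeminorm p) (x y z : X) : p (x - z) ≤ p (x - y) + p (y - z) := by
  simpa using hp.map_add_le (x - y) (y - z)

lemma nonneg (hp : IsLatticeSeminorm p) (x : X) : 0 ≤ p x := by
  have := hp.map_add_le x (-x)
  rw [add_neg_cancel, hp.map_zero, hp.map_neg] at this
  linarith

variable {β : Type*} {F : Filter β}

lemma tendsto_sub_of_forall_approx (hp : IsLatticeSeminorm p) {z : β → X} {a : X}
    (h : ∀ ε > 0, ∃ w, p (a - w) < ε ∧ Tendsto (fun b => p (z b - w)) F (𝓝 0)) :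
    Tendsto (fun b => p (z b - a)) F (𝓝 0) := by
  refine tendsto_order.2 ⟨fun ε hε => .of_forall fun b => hε.trans_le (hp.nonneg _),
    fun ε hε => ?_⟩
  obtain ⟨w, hw, hzw⟩ := h (ε / 2) (half_pos hε)
  filter_upwards [hzw.eventually (gt_mem_nhds (half_pos hε))] with b hb
  calc p (z b - a) ≤ p (z b - w) + p (w - a) := hp.map_sub_le _ _ _
    _ < ε / 2 + ε / 2 := add_lt_add hb (by rwa [hp.map_sub_comm])
    _ = ε := add_halves ε

lemma map_le_of_tendsto_sub (hp : IsLatticeSeminorm p) [F.NeBot] {z : β → X} {a : X} {M : ℝ}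
    (hz : Tendsto (fun b => p (z b - a)) F (𝓝 0)) (hM : ∀ b, p (z b) ≤ M) : p a ≤ M := by
  refine ge_of_tendsto (by simpa using hz.const_add M) (.of_forall fun b => ?_)
  calc p a ≤ p (z b) + p (a - z b) := by simpa using hp.map_add_le (z b) (a - z b)
    _ ≤ M + p (z b - a) := by rw [hp.map_sub_comm]; linarith [hM b]

end AddCommGroup

variable {X : Type*} [AddCommGroup X] [Lattice X] [AddLeftMono X] {p : X → ℝ}

lemma map_abs (hp : IsLatticeSeminorm p) (x : X) : p |x| = p x :=
  le_antisymm (hp.mono _ _ (abs_abs x).le) (hp.mono _ _ (abs_abs x).ge)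

lemma mono_of_nonneg (hp : IsLatticeSeminorm p) {x y : X} (hx : 0 ≤ x) (hxy : x ≤ y) :
    p x ≤ p y :=
  hp.mono _ _ (by rwa [abs_of_nonneg hx, abs_of_nonneg (hx.trans hxy)])

lemma le_of_le_abs (hp : IsLatticeSeminorm p) {x y : X} (hx : 0 ≤ x) (hxy : x ≤ |y|) :
    p x ≤ p y :=
  (hp.mono_of_nonneg hx hxy).trans_eq (hp.map_abs y)

lemma map_add_abs_le (hp : IsLatticeSeminorm p) (x y : X) : p (|x| + |y|) ≤ p x + p y := by
  simpa only [hp.map_abs] using hp.map_add_le |x| |y|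

lemma tendsto_sub_sup {β : Type*} {F : Filter β} (hp : IsLatticeSeminorm p) {z : β → X} {a c : X}
    (ha : Tendsto (fun b => p (z b - a)) F (𝓝 0)) (hc : Tendsto (fun b => p (z b - c)) F (𝓝 0)) :
    Tendsto (fun b => p (z b - a ⊔ c)) F (𝓝 0) := by
  refine squeeze_zero (fun b => hp.nonneg _) (fun b => ?_) (by simpa using ha.add hc)
  calc p (z b - a ⊔ c) = p (z b ⊔ z b - a ⊔ c) := by rw [sup_idem]
    _ ≤ p (|z b - a| + |z b - c|) := hp.mono _ _ <| by
      rw [abs_of_nonneg (add_nonneg (abs_nonneg (z b - a)) (abs_nonneg (z b - c)))]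
      exact abs_sup_sub_sup_le_add _ _ _ _
    _ ≤ p (z b - a) + p (z b - c) := hp.map_add_abs_le _ _

end IsLatticeSeminorm

section LeviLebesgue

variable {X : Type u} [AddCommGroup X] [Lattice X] {Λ : Type*}

def HasLeviProperty (m : Λ → X → ℝ) : Prop :=
  ∀ (α : Type u) [Preorder α] [Nonempty α] [IsDirected α (· ≤ ·)] (x : α → X),
    Monotone x → (∀ a, 0 ≤ x a) → (∀ l, ∃ M : ℝ, ∀ a, m l (x a) ≤ M) →
    ∃ s : X, IsLUB (Set.range x) s

def HasLebesgueProperty (m : Λ → X → ℝ) : Prop :=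
  ∀ (α : Type u) [Preorder α] [Nonempty α] [IsDirected α (· ≤ ·)] (x : α → X),
    Antitone x → IsGLB (Set.range x) 0 → ∀ l, Tendsto (fun a => m l (x a)) atTop (𝓝 0)

variable [AddLeftMono X] {m : Λ → X → ℝ}

lemma HasLeviProperty.exists_isLUB (hLevi : HasLeviProperty m)
    (hm : ∀ l, IsLatticeSeminorm (m l)) {S : Set X} {u : X} (hne : S.Nonempty)
    (hdir : DirectedOn (· ≤ ·) S) (hS : S ⊆ Icc 0 u) : ∃ s, IsLUB S s := by
  have := hne.to_subtype
  have := hdir.isDirectedOrder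
  obtain ⟨s, hs⟩ := hLevi S Subtype.val (fun _ _ h => h) (fun w => (hS w.2).1)
    (fun l => ⟨m l u, fun w => (hm l).mono_of_nonneg (hS w.2).1 (hS w.2).2⟩)
  exact ⟨s, by rwa [Subtype.range_coe] at hs⟩

lemma HasLeviProperty.exists_isGLB (hLevi : HasLeviProperty m)
    (hm : ∀ l, IsLatticeSeminorm (m l)) {S : Set X} {u : X} (hne : S.Nonempty)
    (hdir : DirectedOn (· ≥ ·) S) (hS : S ⊆ Icc 0 u) : ∃ s, IsGLB S s := by
  have hdir' : DirectedOn (· ≤ ·) ((u - ·) '' S) := by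
    rintro _ ⟨w₁, hw₁, rfl⟩ _ ⟨w₂, hw₂, rfl⟩
    obtain ⟨w, hw, h₁, h₂⟩ := hdir w₁ hw₁ w₂ hw₂
    exact ⟨u - w, mem_image_of_mem _ hw, sub_le_sub_left h₁ u, sub_le_sub_left h₂ u⟩
  obtain ⟨t, ht⟩ := hLevi.exists_isLUB hm (hne.image _) hdir' <| by
    rintro _ ⟨w, hw, rfl⟩
    exact ⟨sub_nonneg.2 (hS hw).2, sub_le_self u (hS hw).1⟩
  refine ⟨u - t, fun w hw => sub_le_comm.1 (ht.1 (mem_image_of_mem _ hw)),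
    fun c hc => le_sub_comm.1 (ht.2 ?_)⟩
  rintro _ ⟨w, hw, rfl⟩
  exact sub_le_sub_left (hc hw) u

lemma HasLebesgueProperty.tendsto_sub_of_isLUB (hLeb : HasLebesgueProperty m)
    {α : Type u} [Preorder α] [Nonempty α] [IsDirected α (· ≤ ·)] {x : α → X}
    (hx : Monotone x) {s : X} (hs : IsLUB (range x) s) (l : Λ) :
    Tendsto (fun a => m l (s - x a)) atTop (𝓝 0) := by
  refine hLeb α (fun a => s - x a) (fun a b h => sub_le_sub_left (hx h) s) ⟨?_, fun c hc => ?_⟩ l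
  · rintro _ ⟨a, rfl⟩
    exact sub_nonneg.2 (hs.1 (mem_range_self a))
  · have : s ≤ s - c := hs.2 <| by
      rintro _ ⟨a, rfl⟩
      exact le_sub_comm.1 (hc (mem_range_self a))
    simpa using this

lemma HasLebesgueProperty.exists_sub_lt_of_isLUB (hLeb : HasLebesgueProperty m)
    {S : Set X} (hne : S.Nonempty) (hdir : DirectedOn (· ≤ ·) S) {s : X} (hs : IsLUB S s)
    (l : Λ) {ε : ℝ} (hε : 0 < ε) : ∃ w ∈ S, m l (s - w) < ε := by
  have := hne.to_subtype
  have := hdir.isDirectedOrder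
  have h := hLeb.tendsto_sub_of_isLUB (x := Subtype.val) (fun _ _ h => h)
    (by rwa [Subtype.range_coe]) l
  obtain ⟨w, hw⟩ := (h.eventually (gt_mem_nhds hε)).exists
  exact ⟨w, w.2, hw⟩

open Pointwise in
lemma HasLebesgueProperty.exists_sub_lt_of_isGLB (hLeb : HasLebesgueProperty m)
    {S : Set X} (hne : S.Nonempty) (hdir : DirectedOn (· ≥ ·) S) {s : X} (hs : IsGLB S s)
    (l : Λ) {ε : ℝ} (hε : 0 < ε) : ∃ w ∈ S, m l (w - s) < ε := by
  have hdir' : DirectedOn (· ≤ ·) (-S) := by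
    intro a ha b hb
    obtain ⟨c, hc, h₁, h₂⟩ := hdir (-a) ha (-b) hb
    exact ⟨-c, by simpa using hc, le_neg.1 h₁, le_neg.1 h₂⟩
  obtain ⟨w, hw, h⟩ := hLeb.exists_sub_lt_of_isLUB hne.neg hdir' hs.neg l hε
  exact ⟨-w, hw, by rwa [neg_sub_comm]⟩

lemma HasLebesgueProperty.map_le_of_isLUB (hLeb : HasLebesgueProperty m)
    (hm : ∀ l, IsLatticeSeminorm (m l)) {S : Set X} (hne : S.Nonempty)
    (hdir : DirectedOn (· ≤ ·) S) {s : X} (hs : IsLUB S s) {l : Λ} {C : ℝ}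
    (hC : ∀ w ∈ S, m l w ≤ C) : m l s ≤ C := by
  refine le_of_forall_pos_lt_add fun ε hε => ?_
  obtain ⟨w, hw, hsw⟩ := hLeb.exists_sub_lt_of_isLUB hne hdir hs l hε
  calc m l s ≤ m l w + m l (s - w) := by simpa using (hm l).map_add_le w (s - w)
    _ < C + ε := add_lt_add_of_le_of_lt (hC w hw) hsw

end LeviLebesgue

section IntervalCompleteness

variable {X : Type u} [AddCommGroup X] [Lattice X] [AddLeftMono X] {Λ : Type*}
  {m : Λ → X → ℝ}

lemma exists_sub_le_of_summable (hLevi : HasLeviProperty m) (hLeb : HasLebesgueProperty m)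
    (hm : ∀ l, IsLatticeSeminorm (m l)) {u : X} {a : ℕ → X} (ha : ∀ n, a n ∈ Icc 0 u)
    {l : Λ} {c : ℕ → ℝ} (hc : Summable c) (hac : ∀ n, m l (a (n + 1) - a n) ≤ c n) :
    ∃ T, (∀ k, a 0 - a k ≤ T) ∧ m l T ≤ ∑' n, c n := by
  -- Truncating at `u` keeps the partial sums m-bounded for every seminorm, as Levi requires.
  set S : ℕ → X := fun N => (∑ i ∈ Finset.range N, |a (i + 1) - a i|) ⊓ u
  have hu : 0 ≤ u := (ha 0).1.trans (ha 0).2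
  have hS : range S ⊆ Icc 0 u := by
    rintro _ ⟨N, rfl⟩
    exact ⟨le_inf (Finset.sum_nonneg fun i _ => abs_nonneg _) hu, inf_le_right⟩
  have hSmono : Monotone S := monotone_nat_of_le_succ fun N =>
    inf_le_inf_right u (by simp [Finset.sum_range_succ])
  have hSdir : DirectedOn (· ≤ ·) (range S) := directedOn_range.2 hSmono.directed_le
  obtain ⟨T, hT⟩ := hLevi.exists_isLUB hm (range_nonempty S) hSdir hS
  refine ⟨T, fun k => le_trans ?_ (hT.1 (mem_range_self k)), ?_⟩
  · refine le_inf ?_ ((sub_le_self _ (ha k).1).trans (ha 0).2)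
    rw [← Finset.sum_range_sub']
    exact Finset.sum_le_sum fun i _ => by rw [abs_sub_comm]; exact le_abs_self _
  · refine hLeb.map_le_of_isLUB hm (range_nonempty S) hSdir hT ?_
    rintro _ ⟨N, rfl⟩
    calc m l (S N) ≤ m l (∑ i ∈ Finset.range N, |a (i + 1) - a i|) :=
          (hm l).mono_of_nonneg (hS (mem_range_self N)).1 inf_le_left
      _ ≤ ∑ i ∈ Finset.range N, m l |a (i + 1) - a i| :=
          Finset.le_sum_of_subadditive _ (hm l).map_zero.le (hm l).map_add_le _ _
      _ ≤ ∑ i ∈ Finset.range N, c i :=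
          Finset.sum_le_sum fun i _ => ((hm l).map_abs _).trans_le (hac i)
      _ ≤ ∑' n, c n :=
          hc.sum_le_tsum _ fun i _ => ((hm l).nonneg _).trans (hac i)

lemma exists_tendsto_of_summable (hLevi : HasLeviProperty m) (hLeb : HasLebesgueProperty m)
    (hm : ∀ l, IsLatticeSeminorm (m l)) {u : X} {a : ℕ → X} (ha : ∀ n, a n ∈ Icc 0 u)
    {l : Λ} {c : ℕ → ℝ} (hc : Summable c) (hac : ∀ n, m l (a (n + 1) - a n) ≤ c n) :
    ∃ Q ∈ Icc 0 u, Tendsto (fun n => m l (a n - Q)) atTop (𝓝 0) := by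
  choose T hTa hTc using fun n => exists_sub_le_of_summable hLevi hLeb hm (fun k => ha (k + n))
    ((summable_nat_add_iff n).2 hc) fun k => by simpa [add_right_comm] using hac (k + n)
  -- `V` is increasing, below every `a k` with `k ≥ n`, and `a n - V n ≤ T n`.
  set V := partialSups fun j => (a j - T j)⁺
  have hVa : ∀ n k, n ≤ k → V n ≤ a k := fun n k hnk => partialSups_le _ _ _ fun j hj =>
    sup_le (sub_le_comm.1 (by simpa [Nat.sub_add_cancel (hj.trans hnk)] using hTa j (k - j)))
      (ha k).1
  have hV : range V ⊆ Icc 0 u := by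
    rintro _ ⟨n, rfl⟩
    exact ⟨posPart_nonneg _ |>.trans (le_partialSups (fun j => (a j - T j)⁺) n),
      (hVa n n le_rfl).trans (ha n).2⟩
  have hVdir : DirectedOn (· ≤ ·) (range V) := directedOn_range.2 V.monotone.directed_le
  obtain ⟨Q, hQ⟩ := hLevi.exists_isLUB hm (range_nonempty V) hVdir hV
  have hQV : Tendsto (fun n => m l (Q - V n)) atTop (𝓝 0) := by
    refine tendsto_order.2 ⟨fun ε hε => .of_forall fun n => hε.trans_le ((hm l).nonneg _),
      fun ε hε => ?_⟩
    obtain ⟨_, ⟨N, rfl⟩, hN⟩ := hLeb.exists_sub_lt_of_isLUB (range_nonempty V) hVdir hQ l hε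
    filter_upwards [eventually_ge_atTop N] with n hn
    exact ((hm l).mono_of_nonneg (sub_nonneg.2 (hQ.1 (mem_range_self n)))
      (sub_le_sub_left (V.monotone hn) Q)).trans_lt hN
  refine ⟨Q, ⟨(hV (mem_range_self 0)).1.trans (hQ.1 (mem_range_self 0)),
    hQ.2 fun _ ⟨n, hn⟩ => hn ▸ (hV (mem_range_self n)).2⟩, ?_⟩
  refine squeeze_zero (fun n => (hm l).nonneg _) (fun n => ?_)
    (by simpa using (tendsto_sum_nat_add c).add hQV)
  calc m l (a n - Q) ≤ m l (a n - V n) + m l (V n - Q) := (hm l).map_sub_le _ _ _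
    _ ≤ (∑' k, c (k + n)) + m l (Q - V n) := by
      rw [(hm l).map_sub_comm (V n)]
      refine add_le_add ((hm l).mono_of_nonneg (sub_nonneg.2 (hVa n n le_rfl)) ?_ |>.trans
        (hTc n)) le_rfl
      exact sub_le_comm.1 ((le_posPart _).trans (le_partialSups (fun j => (a j - T j)⁺) n))

variable {β : Type*} [Preorder β] [IsDirected β (· ≤ ·)]

lemma exists_tendsto_of_cauchy (hLevi : HasLeviProperty m) (hLeb : HasLebesgueProperty m)
    (hm : ∀ l, IsLatticeSeminorm (m l)) {u : X} {z : β → X} (hz : ∀ b, z b ∈ Icc 0 u) {l : Λ}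
    (hcau : ∀ ε > 0, ∃ N, ∀ b ≥ N, ∀ c ≥ N, m l (z b - z c) < ε) :
    ∃ w ∈ Icc 0 u, Tendsto (fun b => m l (z b - w)) atTop (𝓝 0) := by
  choose N hN using fun n : ℕ => hcau ((1 / 2) ^ n) (by positivity)
  choose b hbN hbN' using fun n => directed_of (· ≤ ·) (N n) (N (n + 1))
  have hstep : ∀ n, m l (z (b (n + 1)) - z (b n)) ≤ (1 / 2) ^ n := fun n =>
    (hN (n + 1) _ (hbN (n + 1)) _ (hbN' n)).le.trans
      (pow_le_pow_of_le_one (by norm_num) (by norm_num) n.le_succ)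
  obtain ⟨w, hw, hlim⟩ :=
    exists_tendsto_of_summable hLevi hLeb hm (fun n => hz (b n)) summable_geometric_two hstep
  refine ⟨w, hw, tendsto_order.2 ⟨fun ε hε => .of_forall fun c => hε.trans_le ((hm l).nonneg _),
    fun ε hε => ?_⟩⟩
  have hsmall : Tendsto (fun n => (1 / 2 : ℝ) ^ n + m l (z (b n) - w)) atTop (𝓝 0) := by
    simpa using (tendsto_pow_atTop_nhds_zero_of_lt_one (r := (1 / 2 : ℝ)) (by norm_num)
      (by norm_num)).add hlim
  obtain ⟨n, hn⟩ := (hsmall.eventually (gt_mem_nhds hε)).exists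
  filter_upwards [eventually_ge_atTop (b n)] with c hc
  calc m l (z c - w) ≤ m l (z c - z (b n)) + m l (z (b n) - w) := (hm l).map_sub_le _ _ _
    _ < (1 / 2) ^ n + m l (z (b n) - w) :=
      add_lt_add_of_lt_of_le (hN n c ((hbN n).trans hc) _ (hbN n)) le_rfl
    _ < ε := hn

lemma exists_isGreatest_limits (hLevi : HasLeviProperty m) (hLeb : HasLebesgueProperty m)
    (hm : ∀ l, IsLatticeSeminorm (m l)) {u : X} {z : β → X} (hz : ∀ b, z b ∈ Icc 0 u) (l : Λ)
    (hcau : ∀ ε > 0, ∃ N, ∀ b ≥ N, ∀ c ≥ N, m l (z b - z c) < ε) :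
    ∃ s, IsGreatest {w ∈ Icc 0 u | Tendsto (fun b => m l (z b - w)) atTop (𝓝 0)} s := by
  set L := {w ∈ Icc 0 u | Tendsto (fun b => m l (z b - w)) atTop (𝓝 0)}
  have hne : L.Nonempty := exists_tendsto_of_cauchy hLevi hLeb hm hz hcau
  have hdir : DirectedOn (· ≤ ·) L := fun a ha c hc =>
    ⟨a ⊔ c, ⟨⟨ha.1.1.trans le_sup_left, sup_le ha.1.2 hc.1.2⟩, (hm l).tendsto_sub_sup ha.2 hc.2⟩,
      le_sup_left, le_sup_right⟩
  obtain ⟨s, hs⟩ := hLevi.exists_isLUB hm hne hdir fun w hw => hw.1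
  obtain ⟨w₀, hw₀⟩ := hne
  refine ⟨s, ⟨⟨hw₀.1.1.trans (hs.1 hw₀), hs.2 fun w hw => hw.1.2⟩, ?_⟩, hs.1⟩
  refine (hm l).tendsto_sub_of_forall_approx fun ε hε => ?_
  obtain ⟨w, hw, hsw⟩ := hLeb.exists_sub_lt_of_isLUB ⟨w₀, hw₀⟩ hdir hs l hε
  exact ⟨w, hsw, hw.2⟩

lemma exists_tendsto_of_forall_cauchy (hLevi : HasLeviProperty m)
    (hLeb : HasLebesgueProperty m) (hm : ∀ l, IsLatticeSeminorm (m l))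
    (hdir : ∀ l₁ l₂, ∃ l₃, ∀ x : X, m l₁ x ≤ m l₃ x ∧ m l₂ x ≤ m l₃ x)
    {u : X} (hu : 0 ≤ u) {z : β → X} (hz : ∀ b, z b ∈ Icc 0 u)
    (hcau : ∀ l, ∀ ε > 0, ∃ N, ∀ b ≥ N, ∀ c ≥ N, m l (z b - z c) < ε) :
    ∃ w ∈ Icc 0 u, ∀ l, Tendsto (fun b => m l (z b - w)) atTop (𝓝 0) := by
  rcases isEmpty_or_nonempty Λ with hΛ | hΛ
  · exact ⟨u, ⟨hu, le_rfl⟩, isEmptyElim⟩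
  -- The largest `m l`-limit `s l` decreases as `m l` grows, so the infimum of all `s l` is an
  -- `m l`-limit for every `l`.
  choose s hs using fun l => exists_isGreatest_limits hLevi hLeb hm hz l (hcau l)
  have hdom : ∀ {l l' : Λ} {w : X}, (∀ x, m l x ≤ m l' x) →
      Tendsto (fun b => m l' (z b - w)) atTop (𝓝 0) →
      Tendsto (fun b => m l (z b - w)) atTop (𝓝 0) := fun hll' h =>
    squeeze_zero (fun _ => (hm _).nonneg _) (fun _ => hll' _) h
  have hanti : ∀ {l l' : Λ}, (∀ x, m l x ≤ m l' x) → s l' ≤ s l := fun hll' =>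
    (hs _).2 ⟨(hs _).1.1, hdom hll' (hs _).1.2⟩
  have hsdir : DirectedOn (· ≥ ·) (range s) := by
    rintro _ ⟨l₁, rfl⟩ _ ⟨l₂, rfl⟩
    obtain ⟨l₃, hl₃⟩ := hdir l₁ l₂
    exact ⟨s l₃, mem_range_self l₃, hanti fun x => (hl₃ x).1, hanti fun x => (hl₃ x).2⟩
  obtain ⟨w, hw⟩ := hLevi.exists_isGLB hm (range_nonempty s) hsdir
    (range_subset_iff.2 fun l => (hs l).1.1)
  refine ⟨w, ⟨hw.2 (forall_mem_range.2 fun l => (hs l).1.1.1),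
    (hw.1 (mem_range_self hΛ.some)).trans (hs hΛ.some).1.1.2⟩, fun l => ?_⟩
  refine (hm l).tendsto_sub_of_forall_approx fun ε hε => ?_
  obtain ⟨_, ⟨l₁, rfl⟩, hl₁⟩ := hLeb.exists_sub_lt_of_isGLB (range_nonempty s) hsdir hw l hε
  obtain ⟨l₂, hl₂⟩ := hdir l₁ l
  refine ⟨s l₂, ?_, hdom (fun x => (hl₂ x).2) (hs l₂).1.2⟩
  rw [(hm l).map_sub_comm]
  exact ((hm l).mono_of_nonneg (sub_nonneg.2 (hw.1 (mem_range_self l₂)))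
    (sub_le_sub_right (hanti fun x => (hl₂ x).1) w)).trans_lt hl₁

end IntervalCompleteness

section UmConvergence

variable {X : Type u} [AddCommGroup X] [Lattice X] [AddLeftMono X] {Λ : Type*}
  {m : Λ → X → ℝ} {β : Type*} [Preorder β]

def UMCauchy (m : Λ → X → ℝ) (x : β → X) : Prop :=
  ∀ u : X, 0 ≤ u → ∀ l, ∀ ε > (0 : ℝ), ∃ N, ∀ b ≥ N, ∀ c ≥ N, m l (|x b - x c| ⊓ u) < ε

def UMTendsto (m : Λ → X → ℝ) (x : β → X) (x₀ : X) : Prop :=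
  ∀ u : X, 0 ≤ u → ∀ l, Tendsto (fun b => m l (|x b - x₀| ⊓ u)) atTop (𝓝 0)

lemma UMCauchy.comp (hm : ∀ l, IsLatticeSeminorm (m l)) {x : β → X} (hx : UMCauchy m x)
    {φ : X → X} (hφ : ∀ a b, |φ a - φ b| ≤ |a - b|) : UMCauchy m (φ ∘ x) := by
  intro u hu l ε hε
  refine (hx u hu l ε hε).imp fun N hN b hb c hc => lt_of_le_of_lt ?_ (hN b hb c hc)
  exact (hm l).mono_of_nonneg (le_inf (abs_nonneg _) hu) (inf_le_inf_right u (hφ _ _))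

lemma UMTendsto.sub (hm : ∀ l, IsLatticeSeminorm (m l)) {x y : β → X} {x₀ y₀ : X}
    (hx : UMTendsto m x x₀) (hy : UMTendsto m y y₀) : UMTendsto m (x - y) (x₀ - y₀) := by
  intro u hu l
  refine squeeze_zero (fun b => (hm l).nonneg _) (fun b => ?_)
    (by simpa using (hx u hu l).add (hy u hu l))
  calc m l (|(x - y) b - (x₀ - y₀)| ⊓ u)
      ≤ m l (|x b - x₀| ⊓ u + |-(y b - y₀)| ⊓ u) := by
        refine (hm l).mono_of_nonneg (le_inf (abs_nonneg _) hu) ?_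
        have hxy : (x - y) b - (x₀ - y₀) = (x b - x₀) + -(y b - y₀) := by
          simp only [Pi.sub_apply]; abel
        exact hxy ▸ abs_add_inf_le _ _ hu
    _ ≤ m l (|x b - x₀| ⊓ u) + m l (|y b - y₀| ⊓ u) := by
        simpa only [abs_neg] using (hm l).map_add_le _ _

lemma UMTendsto.tendsto_umTop (hm : ∀ l, IsLatticeSeminorm (m l)) {x : β → X} {x₀ : X}
    (hx : UMTendsto m x x₀) : Tendsto x atTop (@nhds X (umTop m) x₀) := by
  rw [umTop, TopologicalSpace.tendsto_nhds_generateFrom_iff]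
  rintro _ ⟨z, ε, l, u, -, hu, rfl⟩ (hx₀ : m l (|x₀ - z| ⊓ u) < ε)
  filter_upwards [(hx u hu l).eventually (gt_mem_nhds (sub_pos.2 hx₀))] with b hb
  calc m l (|x b - z| ⊓ u) ≤ m l (|x b - x₀| ⊓ u + |x₀ - z| ⊓ u) := by
        refine (hm l).mono_of_nonneg (le_inf (abs_nonneg _) hu) ?_
        simpa using abs_add_inf_le (x b - x₀) (x₀ - z) hu
    _ ≤ m l (|x b - x₀| ⊓ u) + m l (|x₀ - z| ⊓ u) := (hm l).map_add_le _ _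
    _ < ε := by linarith

end UmConvergence

section PositiveNets

variable {X : Type u} [AddCommGroup X] [Lattice X] [AddLeftMono X] {Λ : Type*}
  {m : Λ → X → ℝ} {β : Type*} [Preorder β] [IsDirected β (· ≤ ·)]

lemma exists_tendsto_inf_of_umCauchy (hLevi : HasLeviProperty m)
    (hLeb : HasLebesgueProperty m) (hm : ∀ l, IsLatticeSeminorm (m l))
    (hdir : ∀ l₁ l₂, ∃ l₃, ∀ x : X, m l₁ x ≤ m l₃ x ∧ m l₂ x ≤ m l₃ x)
    {y : β → X} (hy : ∀ b, 0 ≤ y b) (hcau : UMCauchy m y) {p : X} (hp : 0 ≤ p) :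
    ∃ w ∈ Icc 0 p, ∀ l, Tendsto (fun b => m l (y b ⊓ p - w)) atTop (𝓝 0) :=
  exists_tendsto_of_forall_cauchy hLevi hLeb hm hdir hp (fun b => ⟨le_inf (hy b) hp, inf_le_right⟩)
    fun l ε hε => (hcau p hp l ε hε).imp fun N hN b hb c hc =>
      ((hm l).mono _ _ (by
        rw [abs_of_nonneg (le_inf (abs_nonneg _) hp)]
        exact abs_inf_sub_inf_le_inf (hy b) (hy c) hp)).trans_lt (hN b hb c hc)

lemma le_of_tendsto_sub_of_le [Nonempty β] (hm : ∀ l, IsLatticeSeminorm (m l))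
    (hsep : ∀ x : X, (∀ l, m l x = 0) → x = 0) {y z : β → X} {a c : X}
    (hy : ∀ l, Tendsto (fun b => m l (y b - a)) atTop (𝓝 0))
    (hz : ∀ l, Tendsto (fun b => m l (z b - c)) atTop (𝓝 0)) (hyz : ∀ b, y b ≤ z b) : a ≤ c := by
  suffices (a - c)⁺ = 0 from sub_nonpos.1 (posPart_eq_zero.1 this)
  refine hsep _ fun l => le_antisymm (ge_of_tendsto' (by simpa using (hy l).add (hz l)) fun b => ?_)
    ((hm l).nonneg _)
  refine ((hm l).mono_of_nonneg (posPart_nonneg _) (sup_le ?_ (by positivity))).trans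
    ((hm l).map_add_abs_le _ _)
  calc a - c = (a - y b) + (y b - z b) + (z b - c) := by abel
    _ ≤ |y b - a| + 0 + |z b - c| := by
      gcongr
      · exact abs_sub_comm a (y b) ▸ le_abs_self _
      · exact sub_nonpos.2 (hyz b)
      · exact le_abs_self _
    _ = |y b - a| + |z b - c| := by rw [add_zero]

lemma exists_umTendsto_of_nonneg [Nonempty β] (hLevi : HasLeviProperty m)
    (hLeb : HasLebesgueProperty m) (hm : ∀ l, IsLatticeSeminorm (m l))
    (hsep : ∀ x : X, (∀ l, m l x = 0) → x = 0)
    (hdir : ∀ l₁ l₂, ∃ l₃, ∀ x : X, m l₁ x ≤ m l₃ x ∧ m l₂ x ≤ m l₃ x)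
    {y : β → X} (hy : ∀ b, 0 ≤ y b) (hbdd : ∀ l, ∃ M : ℝ, ∀ b, m l (y b) ≤ M)
    (hcau : UMCauchy m y) : ∃ x₀, UMTendsto m y x₀ := by
  choose Y hY hYlim using fun p : {p : X // 0 ≤ p} =>
    exists_tendsto_inf_of_umCauchy hLevi hLeb hm hdir hy hcau p.2
  have hYmono : Monotone Y := fun p q hpq =>
    le_of_tendsto_sub_of_le hm hsep (hYlim p) (hYlim q) fun b => inf_le_inf_left _ hpq
  have hYbdd : ∀ l, ∃ M : ℝ, ∀ p, m l (Y p) ≤ M := fun l => (hbdd l).imp fun M hM p =>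
    (hm l).map_le_of_tendsto_sub (hYlim p l) fun b =>
      ((hm l).mono_of_nonneg (le_inf (hy b) p.2) inf_le_left).trans (hM b)
  obtain ⟨x₀, hx₀⟩ := hLevi _ Y hYmono (fun p => (hY p).1) hYbdd
  have hx₀Y := hLeb.tendsto_sub_of_isLUB hYmono hx₀
  -- For `q ≥ p`, `y ⊓ p = (y ⊓ q) ⊓ p` converges to `Y q ⊓ p`, which is close to `x₀ ⊓ p`.
  have hinf : ∀ p : {p : X // 0 ≤ p}, ∀ l,
      Tendsto (fun b => m l (y b ⊓ p - x₀ ⊓ p)) atTop (𝓝 0) := fun p l => by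
    refine (hm l).tendsto_sub_of_forall_approx fun ε hε => ?_
    obtain ⟨q, hq, hpq⟩ :=
      ((hx₀Y l).eventually (gt_mem_nhds hε)).and (eventually_ge_atTop p) |>.exists
    refine ⟨Y q ⊓ p, ((hm l).mono _ _ (abs_inf_sub_inf_le_abs _ _ _)).trans_lt hq,
      squeeze_zero (fun _ => (hm l).nonneg _) (fun b => (hm l).mono _ _ ?_) (hYlim q l)⟩
    have hyq : y b ⊓ (p : X) = y b ⊓ q ⊓ p := by
      rw [inf_assoc, inf_of_le_right (show (p : X) ≤ q from hpq)]
    exact hyq ▸ abs_inf_sub_inf_le_abs _ _ _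
  have hx₀0 : 0 ≤ x₀ := (hY ⟨0, le_rfl⟩).1.trans (hx₀.1 (mem_range_self _))
  refine ⟨x₀, fun u hu l => squeeze_zero (fun _ => (hm l).nonneg _) (fun b => ?_)
    (hinf ⟨x₀ + u, add_nonneg hx₀0 hu⟩ l)⟩
  have hx₀u : x₀ ⊓ (x₀ + u) = x₀ := inf_of_le_left (le_add_of_nonneg_right hu)
  show _ ≤ m l (y b ⊓ (x₀ + u) - x₀ ⊓ (x₀ + u))
  rw [hx₀u]
  exact (hm l).le_of_le_abs (le_inf (abs_nonneg _) hu) (abs_sub_inf_le x₀ (y b) u)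

end PositiveNets

/-- An m-bounded um-closed subset `A` of an MNVL with the Lebesgue and Levi
properties is um-complete: every um-Cauchy net in `A` um-converges to an element of `A`. -/
theorem stmt15 {X : Type u} [AddCommGroup X] [Lattice X]
    [CovariantClass X X (· + ·) (· ≤ ·)] [Module ℝ X]
    {Λ : Type*} (m : Λ → X → ℝ)
    (hadd : ∀ l (x y : X), m l (x + y) ≤ m l x + m l y)
    (hsmul : ∀ l (c : ℝ) (x : X), m l (c • x) = |c| * m l x)
    (hmono : ∀ l (x y : X), |x| ≤ |y| → m l x ≤ m l y)
    (hsep : ∀ x : X, (∀ l, m l x = 0) → x = 0)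
    (hdir : ∀ l₁ l₂, ∃ l₃, ∀ x : X, m l₁ x ≤ m l₃ x ∧ m l₂ x ≤ m l₃ x)
    -- Lebesgue property
    (hLeb : ∀ (α : Type u) [Preorder α] [Nonempty α] [IsDirected α (· ≤ ·)] (x : α → X),
        Antitone x → IsGLB (Set.range x) 0 →
        ∀ l, Tendsto (fun a => m l (x a)) atTop (𝓝 0))
    -- Levi property
    (hLevi : ∀ (α : Type u) [Preorder α] [Nonempty α] [IsDirected α (· ≤ ·)] (x : α → X),
        Monotone x → (∀ a, 0 ≤ x a) → (∀ l, ∃ M : ℝ, ∀ a, m l (x a) ≤ M) →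
        ∃ s : X, IsLUB (Set.range x) s)
    (A : Set X)
    (hAbdd : ∀ l, ∃ M : ℝ, ∀ a ∈ A, m l a ≤ M)
    (hAclosed : @IsClosed X (umTop m) A) :
    ∀ (β : Type u) [Preorder β] [Nonempty β] [IsDirected β (· ≤ ·)] (x : β → X),
      (∀ b, x b ∈ A) →
      (∀ u : X, 0 ≤ u → ∀ l, ∀ ε > (0:ℝ), ∃ N, ∀ b ≥ N, ∀ c ≥ N,
          m l (|x b - x c| ⊓ u) < ε) →
      ∃ x₀ ∈ A, ∀ u : X, 0 ≤ u → ∀ l,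
          Tendsto (fun b => m l (|x b - x₀| ⊓ u)) atTop (𝓝 0) := by
  intro β _ _ _ x hxA hcau
  have hm : ∀ l, IsLatticeSeminorm (m l) := fun l => ⟨hadd l, by simpa using hsmul l 0 0, hmono l⟩
  have hparts : ∀ φ : X → X, (∀ a, 0 ≤ φ a) → φ 0 = 0 → (∀ a b, |φ a - φ b| ≤ |a - b|) →
      ∃ x₀, UMTendsto m (φ ∘ x) x₀ := fun φ hφ hφ0 hφ1 =>
    exists_umTendsto_of_nonneg hLevi hLeb hm hsep hdir (fun b => hφ (x b))
      (fun l => (hAbdd l).imp fun M hM b =>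
        (hmono l _ _ (by simpa [hφ0] using hφ1 (x b) 0)).trans (hM _ (hxA b)))
      (UMCauchy.comp hm hcau hφ1)
  obtain ⟨p, hp⟩ := hparts (·⁺) posPart_nonneg posPart_zero fun a b => abs_sup_sub_sup_le_abs a b 0
  obtain ⟨q, hq⟩ := hparts (·⁻) negPart_nonneg negPart_zero fun a b => by
    simpa only [negPart_def, neg_sub_neg, abs_sub_comm b] using abs_sup_sub_sup_le_abs (-a) (-b) 0
  have hx : (·⁺) ∘ x - (·⁻) ∘ x = x := funext fun b => posPart_sub_negPart (x b)
  have hconv : UMTendsto m x (p - q) := hx ▸ hp.sub hm hq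
  let := umTop m
  exact ⟨p - q, hAclosed.mem_of_tendsto (hconv.tendsto_umTop hm) (.of_forall hxA), hconv⟩
end

section
/- Let (X, M) be a multi-normed vector lattice with the Lebesgue property, {e_γ}_{γ∈Γ} a maximal orthogonal system, B_γ the band generated by e_γ with band projection P_γ. Then a net x_α um-converges to 0 in X if and only if P_γ x_α um-converges to 0 in B_γ for every γ ∈ Γ. -/
/-!
A positive `b` lies in the band generated by `e ≥ 0` exactly when `b = sup_n (b ⊓ n • e)`.
The forward implication holds because `|P_γ x| ≤ |x|`.
Conversely, fix `u ≥ 0`. The elements `0 ≤ v ≤ u` with `m(|x_α| ⊓ v) → 0` form an upward directed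
set, since `|x| ⊓ (v ⊔ w) ≤ |x| ⊓ v + |x| ⊓ w`, and it contains every component `P_γ u`, since
`|x| ⊓ P_γ u ≤ |P_γ x| ⊓ P_γ u`. Maximality of the orthogonal system makes `u` the supremum of the
components, hence of this set, so by the Lebesgue property `m(u - v)` is arbitrarily small on it,
and `m(|x| ⊓ u) ≤ m(|x| ⊓ v) + m(u - v)` concludes.
-/

open Filter Topology Set

section BandGeneratedBy

variable {X : Type*} [AddCommGroup X] [Lattice X] {e x y z b u q : X}

lemma le_of_isLUB_inf_nsmul (h : IsLUB (range fun n : ℕ => x ⊓ n • e) q) : q ≤ x :=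
  h.2 <| by rintro _ ⟨n, rfl⟩; exact inf_le_left

lemma nonneg_of_isLUB_inf_nsmul (hx : 0 ≤ x) (h : IsLUB (range fun n : ℕ => x ⊓ n • e) q) :
    0 ≤ q := by
  simpa [hx] using h.1 ⟨0, rfl⟩

variable [AddLeftMono X]

lemma isLUB_inf_nsmul_of_le (hzb : z ≤ b) (hb : IsLUB (range fun n : ℕ => b ⊓ n • e) b) :
    IsLUB (range fun n : ℕ => z ⊓ n • e) z := by
  refine ⟨by rintro _ ⟨n, rfl⟩; exact inf_le_left, fun c hc => ?_⟩
  have hshift : ∀ n : ℕ, b ⊓ n • e + (z - b) ≤ z ⊓ n • e := fun n => by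
    rw [inf_add, add_sub_cancel]
    exact inf_le_inf_left z (add_le_of_nonpos_right (sub_nonpos.2 hzb))
  have : b ≤ c - (z - b) := hb.2 <| by
    rintro _ ⟨n, rfl⟩
    exact le_sub_iff_add_le.2 ((hshift n).trans (hc ⟨n, rfl⟩))
  simpa using le_sub_iff_add_le.1 this

lemma inf_le_inf_of_isLUB_inf_nsmul (hb : IsLUB (range fun n : ℕ => b ⊓ n • e) b)
    (hy : IsLUB (range fun n : ℕ => y ⊓ n • e) q) : y ⊓ b ≤ q ⊓ b := by
  refine le_inf ((isLUB_inf_nsmul_of_le inf_le_right hb).2 ?_) inf_le_right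
  rintro _ ⟨n, rfl⟩
  exact (inf_le_inf_right _ inf_le_left).trans (hy.1 ⟨n, rfl⟩)

lemma sub_inf_eq_zero_of_isLUB_inf_nsmul (he : 0 ≤ e)
    (h : IsLUB (range fun n : ℕ => u ⊓ n • e) q) : (u - q) ⊓ e = 0 := by
  set t := (u - q) ⊓ e
  -- `u ⊓ n • e + t ≤ u ⊓ (n + 1) • e ≤ q` for all `n`, so `q + t ≤ q`
  have hstep : ∀ n : ℕ, u ⊓ n • e + t ≤ q := fun n => by
    refine le_trans (le_inf ?_ ?_) (h.1 ⟨n + 1, rfl⟩)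
    · calc u ⊓ n • e + t ≤ q + (u - q) := add_le_add (h.1 ⟨n, rfl⟩) inf_le_left
        _ = u := add_sub_cancel q u
    · rw [succ_nsmul]
      exact add_le_add inf_le_right inf_le_right
  have : q ≤ q - t := h.2 <| by
    rintro _ ⟨n, rfl⟩
    exact le_sub_iff_add_le.2 (hstep n)
  exact le_antisymm (by simpa using this)
    (le_inf (sub_nonneg.2 (le_of_isLUB_inf_nsmul h)) he)

lemma isLUB_range_of_isLUB_inf_nsmul {Γ : Type*} {e : Γ → X} (he : ∀ γ, 0 ≤ e γ)
    (hmax : ∀ x : X, (∀ γ, |x| ⊓ e γ = 0) → x = 0) {q : Γ → X}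
    (hq : ∀ γ, IsLUB (range fun n : ℕ => u ⊓ n • e γ) (q γ)) : IsLUB (range q) u := by
  refine ⟨by rintro _ ⟨γ, rfl⟩; exact le_of_isLUB_inf_nsmul (hq γ), fun c hc => ?_⟩
  have hw : 0 ≤ u - u ⊓ c := sub_nonneg.2 inf_le_left
  suffices u - u ⊓ c = 0 from (sub_eq_zero.1 this).trans_le inf_le_right
  refine hmax _ fun γ => le_antisymm ?_ (le_inf (abs_nonneg _) (he γ))
  rw [abs_of_nonneg hw, ← sub_inf_eq_zero_of_isLUB_inf_nsmul (he γ) (hq γ)]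
  exact inf_le_inf_right _
    (sub_le_sub_left (le_inf (le_of_isLUB_inf_nsmul (hq γ)) (hc ⟨γ, rfl⟩)) u)

end BandGeneratedBy

universe u

namespace Seminorm

variable {X : Type u} [AddCommGroup X] [Lattice X] [AddLeftMono X] [Module ℝ X]
  (p : Seminorm ℝ X)

def IsLattice : Prop := ∀ x y : X, |x| ≤ |y| → p x ≤ p y

def HasLebesgueProperty : Prop :=
  ∀ (β : Type u) [Preorder β] [Nonempty β] [IsDirected β (· ≤ ·)] (y : β → X),
    Antitone y → IsGLB (range y) 0 → Tendsto (fun b => p (y b)) atTop (𝓝 0)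

variable {p}

lemma HasLebesgueProperty.exists_sub_lt (hL : p.HasLebesgueProperty) {S : Set X}
    (hne : S.Nonempty) (hdir : DirectedOn (· ≤ ·) S) {u : X} (hu : IsLUB S u) {ε : ℝ}
    (hε : 0 < ε) : ∃ v ∈ S, p (u - v) < ε := by
  have := hne.to_subtype
  have := hdir.isDirectedOrder
  have hglb : IsGLB (range fun v : S => u - v) 0 := by
    refine ⟨by rintro _ ⟨v, rfl⟩; exact sub_nonneg.2 (hu.1 v.2), fun c hc => ?_⟩
    have : u ≤ u - c := hu.2 fun v hv => le_sub_comm.1 (hc ⟨⟨v, hv⟩, rfl⟩)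
    simpa using this
  have hanti : Antitone fun v : S => u - v := fun v w hvw => sub_le_sub_left (α := X) hvw u
  obtain ⟨v, hv⟩ := (hL S _ hanti hglb |>.eventually (gt_mem_nhds hε)).exists
  exact ⟨v, v.2, hv⟩

namespace IsLattice

lemma le_of_nonneg_of_le (hp : p.IsLattice) {a b : X} (ha : 0 ≤ a) (hab : a ≤ b) : p a ≤ p b :=
  hp a b <| by rwa [abs_of_nonneg ha, abs_of_nonneg (ha.trans hab)]

lemma map_inf_le_add (hp : p.IsLattice) (y v w : X) : p (y ⊓ v) ≤ p (y ⊓ w) + p (v - w) :=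
  calc p (y ⊓ v) ≤ p (y ⊓ w) + p (y ⊓ v - y ⊓ w) := by
        simpa using map_add_le_add p (y ⊓ w) (y ⊓ v - y ⊓ w)
    _ ≤ p (y ⊓ w) + p (v - w) := by
        gcongr
        apply hp
        simpa only [inf_comm y, abs_abs] using abs_inf_sub_inf_le_abs v w y

lemma map_sup_le_add (hp : p.IsLattice) {a b : X} (ha : 0 ≤ a) (hb : 0 ≤ b) :
    p (a ⊔ b) ≤ p a + p b :=
  calc p (a ⊔ b) ≤ p (a + b) :=
        hp.le_of_nonneg_of_le (le_sup_of_le_left ha) (by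
          rw [← inf_add_sup a b]; exact le_add_of_nonneg_left (le_inf ha hb))
    _ ≤ p a + p b := map_add_le_add p a b

variable {ι : Type*} {l : Filter ι}

lemma tendsto_zero_of_nonneg_of_le (hp : p.IsLattice) {y z : ι → X} (hy : ∀ i, 0 ≤ y i)
    (hyz : ∀ i, y i ≤ z i) (hz : Tendsto (fun i => p (z i)) l (𝓝 0)) :
    Tendsto (fun i => p (y i)) l (𝓝 0) :=
  squeeze_zero (fun _ => apply_nonneg p _) (fun i => hp.le_of_nonneg_of_le (hy i) (hyz i)) hz

lemma tendsto_abs_inf_sup (hp : p.IsLattice) {x : ι → X} {v w : X} (hv : 0 ≤ v) (hw : 0 ≤ w)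
    (hxv : Tendsto (fun i => p (|x i| ⊓ v)) l (𝓝 0))
    (hxw : Tendsto (fun i => p (|x i| ⊓ w)) l (𝓝 0)) :
    Tendsto (fun i => p (|x i| ⊓ (v ⊔ w))) l (𝓝 0) := by
  let := AddCommGroup.toDistribLattice X
  refine squeeze_zero (fun _ => apply_nonneg p _) (fun i => ?_) (by simpa using hxv.add hxw)
  rw [inf_sup_left]
  exact hp.map_sup_le_add (le_inf (abs_nonneg _) hv) (le_inf (abs_nonneg _) hw)

lemma tendsto_inf_of_forall_sub_lt (hp : p.IsLattice) {y : ι → X} {u : X}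
    (h : ∀ ε > 0, ∃ v, Tendsto (fun i => p (y i ⊓ v)) l (𝓝 0) ∧ p (u - v) < ε) :
    Tendsto (fun i => p (y i ⊓ u)) l (𝓝 0) := by
  refine tendsto_order.2 ⟨fun a ha => .of_forall fun i => ha.trans_le (apply_nonneg p _),
    fun ε hε => ?_⟩
  obtain ⟨v, hv, hvu⟩ := h (ε / 2) (half_pos hε)
  filter_upwards [hv.eventually (gt_mem_nhds (half_pos hε))] with i hi
  linarith [hp.map_inf_le_add (y i) u v]

lemma tendsto_abs_inf_of_isLUB (hp : p.IsLattice) (hL : p.HasLebesgueProperty) {x : ι → X}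
    {S : Set X} (hne : S.Nonempty) (hdir : DirectedOn (· ≤ ·) S) {u : X} (hu : IsLUB S u)
    (hS : ∀ v ∈ S, Tendsto (fun i => p (|x i| ⊓ v)) l (𝓝 0)) :
    Tendsto (fun i => p (|x i| ⊓ u)) l (𝓝 0) :=
  hp.tendsto_inf_of_forall_sub_lt fun _ hε =>
    let ⟨v, hvS, hv⟩ := hL.exists_sub_lt hne hdir hu hε
    ⟨v, hS v hvS, hv⟩

end IsLattice

end Seminorm

theorem stmt17_general {X : Type u} [AddCommGroup X] [Lattice X]
    [CovariantClass X X (· + ·) (· ≤ ·)] [Module ℝ X]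
    {Λ : Type*} (m : Λ → X → ℝ)
    (hadd : ∀ l (x y : X), m l (x + y) ≤ m l x + m l y)
    (hsmul : ∀ l (c : ℝ) (x : X), m l (c • x) = |c| * m l x)
    (hmono : ∀ l (x y : X), |x| ≤ |y| → m l x ≤ m l y)
    -- Lebesgue property
    (hLeb : ∀ (α : Type u) [Preorder α] [Nonempty α] [IsDirected α (· ≤ ·)] (x : α → X),
        Antitone x → IsGLB (Set.range x) 0 →
        ∀ l, Tendsto (fun a => m l (x a)) atTop (𝓝 0))
    -- maximal orthogonal system
    {Γ : Type*} (e : Γ → X)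
    (hepos : ∀ γ, 0 ≤ e γ)
    (hemax : ∀ x : X, (∀ γ, |x| ⊓ e γ = 0) → x = 0)
    -- band projections onto the bands generated by the `e γ`
    (P : Γ → X →ₗ[ℝ] X)
    (hPidem : ∀ γ x, P γ (P γ x) = P γ x)
    (hPabs : ∀ γ x, |P γ x| = P γ |x|)
    (hPband : ∀ γ (x : X), 0 ≤ x →
        IsLUB (Set.range fun n : ℕ => x ⊓ (n • e γ)) (P γ x))
    -- the net
    {α : Type u} [Preorder α] [Nonempty α] [IsDirected α (· ≤ ·)] (x : α → X) :
    (∀ u : X, 0 ≤ u → ∀ l, Tendsto (fun a => m l (|x a| ⊓ u)) atTop (𝓝 0)) ↔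
    (∀ γ, ∀ b : X, 0 ≤ b → P γ b = b →
        ∀ l, Tendsto (fun a => m l (|P γ (x a)| ⊓ b)) atTop (𝓝 0)) := by
  let p l : Seminorm ℝ X := .of (m l) (hadd l) fun c y => by rw [hsmul, Real.norm_eq_abs]
  have hp l : (p l).IsLattice := hmono l
  have hL l : (p l).HasLebesgueProperty := fun β _ _ _ y hy hglb => hLeb β y hy hglb l
  have hPle γ y (hy : 0 ≤ y) : P γ y ≤ y := le_of_isLUB_inf_nsmul (hPband γ y hy)
  constructor
  · rintro h γ b hb - l
    refine (hp l).tendsto_zero_of_nonneg_of_le (fun a => le_inf (abs_nonneg _) hb)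
      (fun a => ?_) (h b hb l)
    rw [hPabs]
    exact inf_le_inf_right b (hPle γ _ (abs_nonneg _))
  · intro h u hu l
    have hPu γ : 0 ≤ P γ u := nonneg_of_isLUB_inf_nsmul hu (hPband γ u hu)
    let S := {v : X | 0 ≤ v ∧ v ≤ u ∧ Tendsto (fun a => p l (|x a| ⊓ v)) atTop (𝓝 0)}
    have hzero : (0 : X) ∈ S := ⟨le_rfl, hu, by simp⟩
    have hcomp γ : P γ u ∈ S := by
      refine ⟨hPu γ, hPle γ u hu, (hp l).tendsto_zero_of_nonneg_of_le
        (fun a => le_inf (abs_nonneg _) (hPu γ)) (fun a => ?_) (h γ _ (hPu γ) (hPidem γ u) l)⟩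
      rw [hPabs]
      exact inf_le_inf_of_isLUB_inf_nsmul (by simpa only [hPidem] using hPband γ _ (hPu γ))
        (hPband γ _ (abs_nonneg _))
    have hdir : DirectedOn (· ≤ ·) S := fun v hv w hw =>
      ⟨v ⊔ w, ⟨hv.1.trans le_sup_left, sup_le hv.2.1 hw.2.1,
        (hp l).tendsto_abs_inf_sup hv.1 hw.1 hv.2.2 hw.2.2⟩, le_sup_left, le_sup_right⟩
    have hS : IsLUB S u :=
      (isLUB_range_of_isLUB_inf_nsmul hepos hemax fun γ => hPband γ u hu).of_subset_of_superset
        isLUB_Iic (range_subset_iff.2 hcomp) fun v hv => hv.2.1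
    exact (hp l).tendsto_abs_inf_of_isLUB (hL l) ⟨0, hzero⟩ hdir hS fun v hv => hv.2.2

/-- Let `(X, M)` be an MNVL with the Lebesgue property, `{e_γ}` a maximal
orthogonal system, and for each `γ` let `P γ` be the band projection onto the band `B_γ`
generated by `e_γ` (characterized by `P γ x = sup_n (x ⊓ n e_γ)` for `x ≥ 0`).
Then `x_α` um-converges to `0` in `X` iff `P γ x_α` um-converges to `0` in `B_γ`
(`= range (P γ)`) for all `γ`. -/
theorem stmt17 {X : Type u} [AddCommGroup X] [Lattice X]
    [CovariantClass X X (· + ·) (· ≤ ·)] [Module ℝ X]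
    {Λ : Type*} (m : Λ → X → ℝ)
    (hadd : ∀ l (x y : X), m l (x + y) ≤ m l x + m l y)
    (hsmul : ∀ l (c : ℝ) (x : X), m l (c • x) = |c| * m l x)
    (hmono : ∀ l (x y : X), |x| ≤ |y| → m l x ≤ m l y)
    (hsep : ∀ x : X, (∀ l, m l x = 0) → x = 0)
    (hdir : ∀ l₁ l₂, ∃ l₃, ∀ x : X, m l₁ x ≤ m l₃ x ∧ m l₂ x ≤ m l₃ x)
    -- Lebesgue property
    (hLeb : ∀ (α : Type u) [Preorder α] [Nonempty α] [IsDirected α (· ≤ ·)] (x : α → X),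
        Antitone x → IsGLB (Set.range x) 0 →
        ∀ l, Tendsto (fun a => m l (x a)) atTop (𝓝 0))
    -- maximal orthogonal system
    {Γ : Type*} (e : Γ → X)
    (hepos : ∀ γ, 0 ≤ e γ) (hene : ∀ γ, e γ ≠ 0)
    (hedisj : ∀ γ γ', γ ≠ γ' → e γ ⊓ e γ' = 0)
    (hemax : ∀ x : X, (∀ γ, |x| ⊓ e γ = 0) → x = 0)
    -- band projections onto the bands generated by the `e γ`
    (P : Γ → X →ₗ[ℝ] X)
    (hPproj : ∀ γ x, 0 ≤ x → 0 ≤ P γ x ∧ P γ x ≤ x)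
    (hPidem : ∀ γ x, P γ (P γ x) = P γ x)
    (hPabs : ∀ γ x, |P γ x| = P γ |x|)
    (hPband : ∀ γ (x : X), 0 ≤ x →
        IsLUB (Set.range fun n : ℕ => x ⊓ (n • e γ)) (P γ x))
    -- the net
    {α : Type u} [Preorder α] [Nonempty α] [IsDirected α (· ≤ ·)] (x : α → X) :
    (∀ u : X, 0 ≤ u → ∀ l, Tendsto (fun a => m l (|x a| ⊓ u)) atTop (𝓝 0)) ↔
    (∀ γ, ∀ b : X, 0 ≤ b → P γ b = b →
        ∀ l, Tendsto (fun a => m l (|P γ (x a)| ⊓ b)) atTop (𝓝 0)) :=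
  stmt17_general m hadd hsmul hmono hLeb e hepos hemax P hPidem hPabs hPband x
end

section
/- Let (X, M) be a multi-normed vector lattice. If every m-bounded and um-closed subset of X is um-compact, then every order interval [a,b] in X is m-compact (compact in the m-topology). -/
/-!
An order interval `[a, b]` is m-bounded and um-closed, so it is um-compact by hypothesis. For
`x, y ∈ [a, b]` we have `|y - x| ≤ b - a`, so the um-seminorm `m l (|y - x| ⊓ (b - a))` is just
`m l (y - x)`: on `[a, b]` the um-topology is finer than the m-topology, and the identity map
carries the um-compact set `[a, b]` onto an m-compact one.
-/

open Filter Topology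

open Set

section SeminormFamily

variable {X : Type*} {Λ : Type*} {m : Λ → X → ℝ}

section Seminorm

variable [AddCommGroup X] [Module ℝ X]

theorem seminorm_zero (hsmul : ∀ l (c : ℝ) (x : X), m l (c • x) = |c| * m l x) (l : Λ) :
    m l 0 = 0 := by
  simpa using hsmul l 0 0

theorem seminorm_nonneg (hadd : ∀ l (x y : X), m l (x + y) ≤ m l x + m l y)
    (hsmul : ∀ l (c : ℝ) (x : X), m l (c • x) = |c| * m l x) (l : Λ) (x : X) : 0 ≤ m l x := by
  have hneg : m l (-x) = m l x := by simpa using hsmul l (-1) x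
  have := hadd l x (-x)
  rw [add_neg_cancel, seminorm_zero hsmul, hneg] at this
  linarith

end Seminorm

section LatticeSeminorm

variable [AddCommGroup X] [Lattice X]

theorem seminorm_le_of_abs_le (hmono : ∀ l (x y : X), |x| ≤ |y| → m l x ≤ m l y)
    {x y : X} (h : |x| ≤ y) (l : Λ) : m l x ≤ m l y :=
  hmono l x y (h.trans (le_abs_self y))

theorem seminorm_bddAbove_Icc [AddLeftMono X] (hmono : ∀ l (x y : X), |x| ≤ |y| → m l x ≤ m l y)
    (a b : X) (l : Λ) : ∃ M : ℝ, ∀ y ∈ Icc a b, m l y ≤ M := by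
  refine ⟨m l (|a| ⊔ |b|), fun y hy => seminorm_le_of_abs_le hmono (abs_le'.2 ⟨?_, ?_⟩) l⟩
  · exact hy.2.trans ((le_abs_self b).trans le_sup_right)
  · exact (neg_le_neg_iff.2 hy.1).trans ((neg_le_abs a).trans le_sup_left)

end LatticeSeminorm

section UmTopology

variable [AddCommGroup X] [Lattice X] [AddLeftMono X] [Module ℝ X]

theorem umBall_mem_nhds (hsmul : ∀ l (c : ℝ) (x : X), m l (c • x) = |c| * m l x)
    (x : X) {u : X} (hu : 0 ≤ u) {ε : ℝ} (hε : 0 < ε) (l : Λ) :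
    {y : X | m l (|y - x| ⊓ u) < ε} ∈ @nhds X (umTop m) x := by
  refine @IsOpen.mem_nhds X (umTop m) x _
    (TopologicalSpace.GenerateOpen.basic _ ⟨x, ε, l, u, hε, hu, rfl⟩) ?_
  simpa [inf_eq_left.2 hu, seminorm_zero hsmul] using hε

theorem compl_mem_umNhds_of_le_abs_sub (hadd : ∀ l (x y : X), m l (x + y) ≤ m l x + m l y)
    (hsmul : ∀ l (c : ℝ) (x : X), m l (c • x) = |c| * m l x)
    (hsep : ∀ x : X, (∀ l, m l x = 0) → x = 0) {x w : X} (hw₀ : 0 ≤ w) (hw : w ≠ 0)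
    {s : Set X} (hs : ∀ y ∈ s, w ≤ |y - x|) : sᶜ ∈ @nhds X (umTop m) x := by
  obtain ⟨l, hl⟩ : ∃ l, m l w ≠ 0 := by
    by_contra! h
    exact hw (hsep w h)
  have hpos : 0 < m l w := (seminorm_nonneg hadd hsmul l w).lt_of_ne' hl
  -- on `s` the truncation `|y - x| ⊓ w` is `w` itself, so this um-ball misses `s`
  filter_upwards [umBall_mem_nhds hsmul x hw₀ hpos l] with y hy hys
  rw [inf_eq_right.2 (hs y hys)] at hy
  exact lt_irrefl _ hy

theorem isClosed_Ici_umTop (hadd : ∀ l (x y : X), m l (x + y) ≤ m l x + m l y)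
    (hsmul : ∀ l (c : ℝ) (x : X), m l (c • x) = |c| * m l x)
    (hsep : ∀ x : X, (∀ l, m l x = 0) → x = 0) (a : X) : @IsClosed X (umTop m) (Ici a) := by
  let _ : TopologicalSpace X := umTop m
  refine isOpen_compl_iff.1 <| isOpen_iff_mem_nhds.2
    fun x hx => compl_mem_umNhds_of_le_abs_sub hadd hsmul hsep (posPart_nonneg (a - x)) ?_ ?_
  · simpa [posPart_eq_zero, sub_nonpos] using hx
  · intro y hy
    exact sup_le ((sub_le_sub_right hy x).trans (le_abs_self _)) (abs_nonneg _)

theorem isClosed_Iic_umTop (hadd : ∀ l (x y : X), m l (x + y) ≤ m l x + m l y)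
    (hsmul : ∀ l (c : ℝ) (x : X), m l (c • x) = |c| * m l x)
    (hsep : ∀ x : X, (∀ l, m l x = 0) → x = 0) (b : X) : @IsClosed X (umTop m) (Iic b) := by
  let _ : TopologicalSpace X := umTop m
  refine isOpen_compl_iff.1 <| isOpen_iff_mem_nhds.2
    fun x hx => compl_mem_umNhds_of_le_abs_sub hadd hsmul hsep (posPart_nonneg (x - b)) ?_ ?_
  · simpa [posPart_eq_zero, sub_nonpos] using hx
  · intro y hy
    refine sup_le ((sub_le_sub_left hy x).trans ?_) (abs_nonneg _)
    simpa using neg_le_abs (y - x)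

theorem isClosed_Icc_umTop (hadd : ∀ l (x y : X), m l (x + y) ≤ m l x + m l y)
    (hsmul : ∀ l (c : ℝ) (x : X), m l (c • x) = |c| * m l x)
    (hsep : ∀ x : X, (∀ l, m l x = 0) → x = 0) (a b : X) : @IsClosed X (umTop m) (Icc a b) := by
  rw [← Ici_inter_Iic]
  exact @IsClosed.inter X _ _ (umTop m) (isClosed_Ici_umTop hadd hsmul hsep a)
    (isClosed_Iic_umTop hadd hsmul hsep b)

/-- Where `|y - x| ≤ u`, truncating at `u` changes nothing, so um-convergence to `x` within `s`
implies m-convergence. -/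
theorem continuousWithinAt_id_umTop_mTop (hadd : ∀ l (x y : X), m l (x + y) ≤ m l x + m l y)
    (hsmul : ∀ l (c : ℝ) (x : X), m l (c • x) = |c| * m l x)
    (hmono : ∀ l (x y : X), |x| ≤ |y| → m l x ≤ m l y) {u : X} (hu : 0 ≤ u) {x : X}
    {s : Set X} (hs : ∀ y ∈ s, |y - x| ≤ u) : @ContinuousWithinAt X X (umTop m) (mTop m) id s x := by
  unfold ContinuousWithinAt mTop
  rw [TopologicalSpace.nhds_generateFrom]
  refine tendsto_iInf.2 fun t => tendsto_iInf.2 fun ⟨hxt, z, ε, l, hε, ht⟩ => ?_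
  subst ht
  have hxz : m l (x - z) < ε := hxt
  refine tendsto_principal.2 ?_
  filter_upwards [@mem_nhdsWithin_of_mem_nhds X (umTop m) _ _ _
      (umBall_mem_nhds hsmul x hu (sub_pos.2 hxz) l), @self_mem_nhdsWithin X (umTop m) _ _]
    with y hy hys
  rw [inf_eq_left.2 (hs y hys)] at hy
  calc m l (y - z) ≤ m l (y - x) + m l (x - z) := by simpa using hadd l (y - x) (x - z)
    _ ≤ m l |y - x| + m l (x - z) := by
      gcongr
      exact seminorm_le_of_abs_le hmono le_rfl l
    _ < ε := by linarith

end UmTopology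

end SeminormFamily

theorem stmt18_general {X : Type*} [AddCommGroup X] [Lattice X]
    [CovariantClass X X (· + ·) (· ≤ ·)] [Module ℝ X]
    {Λ : Type*} (m : Λ → X → ℝ)
    (hadd : ∀ l (x y : X), m l (x + y) ≤ m l x + m l y)
    (hsmul : ∀ l (c : ℝ) (x : X), m l (c • x) = |c| * m l x)
    (hmono : ∀ l (x y : X), |x| ≤ |y| → m l x ≤ m l y)
    (hsep : ∀ x : X, (∀ l, m l x = 0) → x = 0)
    (hcompact : ∀ A : Set X, (∀ l, ∃ M : ℝ, ∀ a ∈ A, m l a ≤ M) →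
        @IsClosed X (umTop m) A → @IsCompact X (umTop m) A) :
    ∀ a b : X, @IsCompact X (mTop m) (Set.Icc a b) := by
  intro a b
  have hum : @IsCompact X (umTop m) (Icc a b) :=
    hcompact _ (seminorm_bddAbove_Icc hmono a b) (isClosed_Icc_umTop hadd hsmul hsep a b)
  have hcont : @ContinuousOn X X (umTop m) (mTop m) id (Icc a b) := fun x hx =>
    continuousWithinAt_id_umTop_mTop hadd hsmul hmono (sub_nonneg.2 (hx.1.trans hx.2))
      fun y hy => abs_le'.2 ⟨sub_le_sub hy.2 hx.1, by simpa using sub_le_sub hx.2 hy.1⟩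
  have := @IsCompact.image_of_continuousOn X X (umTop m) (mTop m) _ _ hum hcont
  rwa [image_id] at this

/-- In an MNVL, if every m-bounded um-closed subset is um-compact, then
every order interval `[a, b]` is m-compact. -/
theorem stmt18 {X : Type*} [AddCommGroup X] [Lattice X]
    [CovariantClass X X (· + ·) (· ≤ ·)] [Module ℝ X]
    {Λ : Type*} (m : Λ → X → ℝ)
    (hadd : ∀ l (x y : X), m l (x + y) ≤ m l x + m l y)
    (hsmul : ∀ l (c : ℝ) (x : X), m l (c • x) = |c| * m l x)
    (hmono : ∀ l (x y : X), |x| ≤ |y| → m l x ≤ m l y)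
    (hsep : ∀ x : X, (∀ l, m l x = 0) → x = 0)
    (hdir : ∀ l₁ l₂, ∃ l₃, ∀ x : X, m l₁ x ≤ m l₃ x ∧ m l₂ x ≤ m l₃ x)
    (hcompact : ∀ A : Set X, (∀ l, ∃ M : ℝ, ∀ a ∈ A, m l a ≤ M) →
        @IsClosed X (umTop m) A → @IsCompact X (umTop m) A) :
    ∀ a b : X, @IsCompact X (mTop m) (Set.Icc a b) :=
  stmt18_general m hadd hsmul hmono hsep hcompact
end
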